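/- arXiv:2305.16565 — 6 statements merged into one kernel-verified Lean document; each statement's English description precedes it below -/
import Mathlib

section
/- Let N ≥ 2, 2 < p < 2 + 8/N, a > 0, and define m_{p,a} := inf { J_p(u) : u ∈ H²(ℝ^N), ‖u‖_2 = a }, where J_p(u) = (1/2)‖Δu‖_2² − (1/p)‖u‖_p^p. Then −∞ < m_{p,a} < 0. -/
open MeasureTheory Filter Set
open scoped ENNReal NNReal

noncomputable section

/-- The Laplacian of a function on `ℝ^N`, written via the second iterated derivative. -/
def lap {N : ℕ} (u : EuclideanSpace ℝ (Fin N) → ℝ) (x : EuclideanSpace ℝ (Fin N)) : ℝ :=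
  ∑ i : Fin N,
    iteratedFDeriv ℝ 2 u x ![EuclideanSpace.single i 1, EuclideanSpace.single i 1]

/-- The real-valued `L^p` norm on `ℝ^N` (Lebesgue measure). -/
def lpnorm {N : ℕ} (p : ℝ) (u : EuclideanSpace ℝ (Fin N) → ℝ) : ℝ :=
  (eLpNorm u (ENNReal.ofReal p) volume).toReal

/-- Membership in `H²(ℝ^N)` (smooth representative): `u ∈ L²` and `Δu ∈ L²`. -/
def inH2 {N : ℕ} (u : EuclideanSpace ℝ (Fin N) → ℝ) : Prop :=
  ContDiff ℝ 2 u ∧ MemLp u 2 volume ∧ MemLp (fun x => lap u x) 2 volume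

namespace GSAux

variable {N : ℕ}

lemma lpnorm_nonneg (q : ℝ) (u : EuclideanSpace ℝ (Fin N) → ℝ) : 0 ≤ lpnorm q u :=
  ENNReal.toReal_nonneg

lemma young_bound {X t α : ℝ} (hX : 0 ≤ X) (ht : 0 < t) (hα0 : 0 ≤ α) (hα2 : α ≤ 2) :
    X ^ α ≤ t ^ (2 - α) * X ^ (2:ℝ) + t ^ (-α) := by
  have htX : 0 ≤ t * X := by positivity
  have hkey : X ^ α = t ^ (-α) * (t * X) ^ α := by
    rw [Real.mul_rpow ht.le hX, ← mul_assoc, ← Real.rpow_add ht, neg_add_cancel,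
      Real.rpow_zero, one_mul]
  rcases le_total (t * X) 1 with h | h
  · have h1 : (t * X) ^ α ≤ 1 := Real.rpow_le_one htX h hα0
    have h2 : X ^ α ≤ t ^ (-α) := by
      rw [hkey]
      calc t ^ (-α) * (t * X) ^ α ≤ t ^ (-α) * 1 := by
            exact mul_le_mul_of_nonneg_left h1 (Real.rpow_nonneg ht.le _)
        _ = t ^ (-α) := mul_one _
    have h3 : 0 ≤ t ^ (2 - α) * X ^ (2:ℝ) := by positivity
    linarith
  · have h1 : (t * X) ^ α ≤ (t * X) ^ (2:ℝ) := Real.rpow_le_rpow_of_exponent_le h hα2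
    have h2 : X ^ α ≤ t ^ (2 - α) * X ^ (2:ℝ) := by
      rw [hkey]
      calc t ^ (-α) * (t * X) ^ α ≤ t ^ (-α) * (t * X) ^ (2:ℝ) := by
            exact mul_le_mul_of_nonneg_left h1 (Real.rpow_nonneg ht.le _)
        _ = t ^ (2 - α) * X ^ (2:ℝ) := by
            rw [Real.mul_rpow ht.le hX, ← mul_assoc, ← Real.rpow_add ht]
            ring_nf
    have h3 : 0 ≤ t ^ (-α) := Real.rpow_nonneg ht.le _
    linarith

lemma quad_lower {C α : ℝ} (hC : 0 < C) (hα0 : 0 ≤ α) (hα2 : α < 2) {X : ℝ} (hX : 0 ≤ X) :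
    -(C * ((2*C) ^ (-(1:ℝ)/(2-α))) ^ (-α)) ≤ (1/2) * X ^ (2:ℝ) - C * X ^ α := by
  set t := (2*C) ^ (-(1:ℝ)/(2-α)) with htdef
  have h2C : (0:ℝ) < 2 * C := by linarith
  have htpos : 0 < t := Real.rpow_pos_of_pos h2C _
  have hne : (2:ℝ) - α ≠ 0 := by linarith
  have key : t ^ (2 - α) = (2*C)⁻¹ := by
    rw [htdef, ← Real.rpow_mul h2C.le, div_mul_cancel₀ _ hne, Real.rpow_neg_one]
  have hyb := young_bound hX htpos hα0 hα2.le
  have h1 : C * X ^ α ≤ C * (t ^ (2-α) * X ^ (2:ℝ) + t ^ (-α)) :=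
    mul_le_mul_of_nonneg_left hyb hC.le
  rw [key] at h1
  have : C * ((2*C)⁻¹ * X ^ (2:ℝ) + t ^ (-α)) = (1/2) * X ^ (2:ℝ) + C * t ^ (-α) := by
    field_simp
  rw [this] at h1
  linarith


lemma lpnorm_const_mul (q : ℝ) (c : ℝ) (f : EuclideanSpace ℝ (Fin N) → ℝ) :
    lpnorm q (fun x => c * f x) = |c| * lpnorm q f := by
  have : (fun x => c * f x) = c • f := rfl
  rw [lpnorm, this, eLpNorm_const_smul, lpnorm]
  simp [ENNReal.toReal_smul, Real.norm_eq_abs]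

lemma lpnorm_scale (q : ℝ) (hq : 0 < q) (f : EuclideanSpace ℝ (Fin N) → ℝ)
    (hf : Continuous f) {l : ℝ} (hl : 0 < l) :
    lpnorm q (fun x => f (l • x)) = l ^ (-(N:ℝ)/q) * lpnorm q f := by
  have hl0 : l ≠ 0 := ne_of_gt hl
  have hmap : Measure.map (l • ·) (volume : Measure (EuclideanSpace ℝ (Fin N)))
      = ENNReal.ofReal |(l ^ Module.finrank ℝ (EuclideanSpace ℝ (Fin N)))⁻¹| • volume :=
    Measure.map_addHaar_smul volume hl0
  have h1 := eLpNorm_map_measure (μ := (volume : Measure (EuclideanSpace ℝ (Fin N)))) (p := ENNReal.ofReal q) (f := (l • · : EuclideanSpace ℝ (Fin N) → _))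
    (g := f) hf.aestronglyMeasurable (continuous_const_smul l).aemeasurable
  rw [hmap, eLpNorm_smul_measure_of_ne_top (by simp : (ENNReal.ofReal q) ≠ ∞)] at h1
  have hfr : Module.finrank ℝ (EuclideanSpace ℝ (Fin N)) = N := finrank_euclideanSpace_fin
  have habs : |(l ^ Module.finrank ℝ (EuclideanSpace ℝ (Fin N)))⁻¹| = l ^ (-(N:ℝ)) := by
    rw [hfr, abs_inv, abs_of_pos (pow_pos hl N), ← Real.rpow_natCast l N, ← Real.rpow_neg hl.le]
  have hexp : ((1 : ℝ≥0∞) / ENNReal.ofReal q).toReal = q⁻¹ := by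
    rw [one_div, ENNReal.toReal_inv, ENNReal.toReal_ofReal hq.le]
  have hc : (ENNReal.ofReal |(l ^ Module.finrank ℝ (EuclideanSpace ℝ (Fin N)))⁻¹|)
        ^ ((1 : ℝ≥0∞) / ENNReal.ofReal q).toReal = ENNReal.ofReal (l ^ (-(N:ℝ)/q)) := by
    rw [habs, hexp, ENNReal.ofReal_rpow_of_pos (Real.rpow_pos_of_pos hl _),
      ← Real.rpow_mul hl.le, ← div_eq_mul_inv]
  rw [hc] at h1
  have : (fun x => f (l • x)) = f ∘ (l • ·) := rfl
  rw [lpnorm, this, ← h1, smul_eq_mul, ENNReal.toReal_mul,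
    ENNReal.toReal_ofReal (Real.rpow_nonneg hl.le _), lpnorm]

lemma lap_smul_comp {f : EuclideanSpace ℝ (Fin N) → ℝ} (hf : ContDiff ℝ 2 f) (c l : ℝ)
    (x : EuclideanSpace ℝ (Fin N)) :
    lap (fun y => c * f (l • y)) x = c * l ^ (2:ℕ) * lap f (l • x) := by
  set L : EuclideanSpace ℝ (Fin N) →L[ℝ] EuclideanSpace ℝ (Fin N) :=
    l • ContinuousLinearMap.id ℝ (EuclideanSpace ℝ (Fin N)) with hL
  have hcomp : ContDiff ℝ 2 (f ∘ L) := hf.comp L.contDiff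
  have hfun : (fun y => c * f (l • y)) = c • (f ∘ L) := rfl
  rw [hfun]
  unfold lap
  rw [Finset.mul_sum]
  apply Finset.sum_congr rfl
  intro i _
  rw [iteratedFDeriv_const_smul_apply hcomp.contDiffAt,
    L.iteratedFDeriv_comp_right hf x le_rfl]
  rw [ContinuousMultilinearMap.smul_apply, ContinuousMultilinearMap.compContinuousLinearMap_apply]
  have hv : (fun j => L (![EuclideanSpace.single i 1, EuclideanSpace.single i 1] j))
      = fun j => l • (![EuclideanSpace.single i (1:ℝ), EuclideanSpace.single i 1] j) := rfl
  rw [hv, (iteratedFDeriv ℝ 2 f (L x)).map_smul_univ (fun _ => l)]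
  simp only [hL, smul_eq_mul, ContinuousLinearMap.smul_apply, ContinuousLinearMap.id_apply]
  simp [smul_eq_mul]
  ring

lemma lap_continuous {u : EuclideanSpace ℝ (Fin N) → ℝ} (hu : ContDiff ℝ 2 u) :
    Continuous (lap u) := by
  apply continuous_finset_sum
  intro i _
  exact (continuous_eval_const _).comp
    (hu.continuous_iteratedFDeriv le_rfl)

lemma lap_hasCompactSupport {u : EuclideanSpace ℝ (Fin N) → ℝ} (hu : HasCompactSupport u) :
    HasCompactSupport (lap u) := by
  have h := hu.iteratedFDeriv (𝕜 := ℝ) 2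
  have : lap u = (fun M : ContinuousMultilinearMap ℝ (fun _ : Fin 2 => EuclideanSpace ℝ (Fin N)) ℝ =>
      ∑ i : Fin N, M ![EuclideanSpace.single i 1, EuclideanSpace.single i 1]) ∘
      iteratedFDeriv ℝ 2 u := rfl
  rw [this]
  exact h.comp_left (by simp)


lemma bump_lpnorm_pos (ψ : ContDiffBump (0 : EuclideanSpace ℝ (Fin N))) (q : ℝ) (hq : 0 < q) :
    0 < lpnorm q (fun x => ψ x) := by
  have hφc : Continuous fun x => ψ x := ψ.continuous
  have hφs : HasCompactSupport fun x => ψ x := ψ.hasCompactSupport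
  have hfin : eLpNorm (fun x => ψ x) (ENNReal.ofReal q) volume ≠ ⊤ :=
    (hφc.memLp_of_hasCompactSupport hφs).eLpNorm_ne_top
  have hne : eLpNorm (fun x => ψ x) (ENNReal.ofReal q) volume ≠ 0 := by
    intro h0
    have hq0 : ENNReal.ofReal q ≠ 0 := by simp [ENNReal.ofReal_eq_zero]; linarith
    have h0' := (eLpNorm_eq_zero_iff hφc.aestronglyMeasurable hq0).1 h0
    have hz : volume {x | ψ x ≠ 0} = 0 := by
      simpa [Filter.EventuallyEq, ae_iff] using h0'
    have hball : Metric.ball (0 : EuclideanSpace ℝ (Fin N)) ψ.rIn ⊆ {x | ψ x ≠ 0} := by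
      intro x hx
      have : ψ x = 1 := ψ.one_of_mem_closedBall (Metric.ball_subset_closedBall hx)
      simp [this]
    have := measure_mono_null hball hz
    exact (Metric.measure_ball_pos volume _ ψ.rIn_pos).ne' this
  exact ENNReal.toReal_pos hne hfin

end GSAux

open GSAux in
set_option maxHeartbeats 1000000 in
/-- For `N ≥ 2`, `2 < p < 2 + 8/N` (mass-subcritical) and `a > 0`, the ground state
energy `m_{p,a} = inf { J_p(u) : u ∈ H², ‖u‖₂ = a }`, with
`J_p(u) = ½‖Δu‖₂² - (1/p)‖u‖_p^p`, satisfies `-∞ < m_{p,a} < 0`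
(given the Gagliardo–Nirenberg inequality with constant `B > 0`). -/
theorem groundstate_energy_neg_finite (N : ℕ) (hN : 2 ≤ N) (p a : ℝ)
    (hp : 2 < p) (hp' : p < 2 + 8 / N) (ha : 0 < a)
    (B : ℝ) (hB : 0 < B)
    (hGN : ∀ u : EuclideanSpace ℝ (Fin N) → ℝ, inH2 u →
      lpnorm p u ^ p ≤
        B * lpnorm 2 u ^ (p * (1 - N * (p - 2) / (4 * p))) *
          lpnorm 2 (lap u) ^ (p * (N * (p - 2) / (4 * p)))) :
    BddBelow ((fun u : EuclideanSpace ℝ (Fin N) → ℝ =>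
        (1 / 2) * lpnorm 2 (lap u) ^ 2 - (1 / p) * lpnorm p u ^ p) ''
        {u | inH2 u ∧ lpnorm 2 u = a}) ∧
    sInf ((fun u : EuclideanSpace ℝ (Fin N) → ℝ =>
        (1 / 2) * lpnorm 2 (lap u) ^ 2 - (1 / p) * lpnorm p u ^ p) ''
        {u | inH2 u ∧ lpnorm 2 u = a}) < 0 := by
  classical
  have hp0 : (0:ℝ) < p := by linarith
  have hN0 : (0:ℝ) < N := by
    have : (2:ℝ) ≤ N := by exact_mod_cast hN
    linarith
  set γ := (N:ℝ) * (p - 2) / (4 * p) with hγ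
  set α := p * γ with hα
  have hα_eq : α = (N:ℝ) * (p - 2) / 4 := by
    rw [hα, hγ]; field_simp
  have hα0 : 0 ≤ α := by
    rw [hα_eq]
    exact div_nonneg (mul_nonneg hN0.le (by linarith)) (by norm_num)
  have hNp8 : (N:ℝ) * (p - 2) < 8 := by
    have h8 : p - 2 < 8 / N := by linarith
    calc (N:ℝ) * (p - 2) < N * (8 / N) := by
          exact mul_lt_mul_of_pos_left h8 hN0
      _ = 8 := by field_simp
  have hα2 : α < 2 := by rw [hα_eq]; linarith
  set C := (1/p) * (B * a ^ (p * (1 - γ))) with hC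
  have hCpos : 0 < C := by
    have : (0:ℝ) < a ^ (p * (1 - γ)) := Real.rpow_pos_of_pos ha _
    positivity
  set M := -(C * ((2*C) ^ (-(1:ℝ)/(2-α))) ^ (-α)) with hM
  have hbdd : M ∈ lowerBounds ((fun u : EuclideanSpace ℝ (Fin N) → ℝ =>
        (1 / 2) * lpnorm 2 (lap u) ^ 2 - (1 / p) * lpnorm p u ^ p) ''
        {u | inH2 u ∧ lpnorm 2 u = a}) := by
    rintro y ⟨u, ⟨huH2, hmass⟩, rfl⟩
    dsimp only
    set X := lpnorm 2 (lap u) with hX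
    have hX0 : 0 ≤ X := lpnorm_nonneg _ _
    have hGNu := hGN u huH2
    rw [hmass] at hGNu
    have h1 : (1/p) * lpnorm p u ^ p ≤ C * X ^ α := by
      have h := mul_le_mul_of_nonneg_left hGNu (by positivity : (0:ℝ) ≤ 1/p)
      calc (1/p) * lpnorm p u ^ p ≤ (1/p) * (B * a ^ (p * (1 - γ)) * X ^ α) := h
        _ = C * X ^ α := by rw [hC]; ring
    have h2 := quad_lower hCpos hα0 hα2 hX0
    have hXsq : X ^ (2:ℝ) = X ^ (2:ℕ) := by
      rw [← Real.rpow_natCast X 2]; norm_num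
    rw [hXsq] at h2
    rw [← hM] at h2
    linarith
  refine ⟨⟨M, hbdd⟩, ?_⟩
  clear_value γ α C M
  clear hGN
  -- construction of a test function with negative energy
  set ψ : ContDiffBump (0 : EuclideanSpace ℝ (Fin N)) := ⟨1, 2, one_pos, one_lt_two⟩ with hψ
  set φ : EuclideanSpace ℝ (Fin N) → ℝ := fun x => ψ x with hφdef
  have hφsm : ContDiff ℝ 2 φ := ψ.contDiff
  have hφc : Continuous φ := ψ.continuous
  have hφs : HasCompactSupport φ := ψ.hasCompactSupport
  set m2 := lpnorm 2 φ with hm2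
  set mp := lpnorm p φ with hmpdef
  set d := lpnorm 2 (lap φ) with hddef
  have hm2pos : 0 < m2 := bump_lpnorm_pos ψ 2 two_pos
  have hmppos : 0 < mp := bump_lpnorm_pos ψ p hp0
  have hd0 : 0 ≤ d := lpnorm_nonneg _ _
  set s := (N:ℝ) * (p - 2) / 2 with hs
  have hs0 : 0 < s := div_pos (mul_pos hN0 (by linarith)) two_pos
  have hs4 : s < 4 := by rw [hs]; linarith
  set K1 := (1/2) * (a * d / m2) ^ (2:ℕ) with hK1
  set K2 := (1/p) * (a * mp / m2) ^ p with hK2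
  have hK1nn : 0 ≤ K1 := by positivity
  have hbase : 0 < a * mp / m2 := by positivity
  have hK2pos : 0 < K2 := by
    have := Real.rpow_pos_of_pos hbase p
    positivity
  set l0 := min 1 (K2 / (K1 + 1)) with hl0def
  have hl0pos : 0 < l0 := lt_min one_pos (by positivity)
  have hl0le : l0 ≤ K2 / (K1 + 1) := min_le_right _ _
  set l := l0 ^ ((1:ℝ)/(4 - s)) with hldef
  have hlpos : 0 < l := Real.rpow_pos_of_pos hl0pos _
  have h4s : (4:ℝ) - s ≠ 0 := by linarith
  have hl4s : l ^ ((4:ℝ) - s) = l0 := by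
    rw [hldef, ← Real.rpow_mul hl0pos.le, one_div, inv_mul_cancel₀ h4s, Real.rpow_one]
  set c := a * l ^ ((N:ℝ)/2) / m2 with hcdef
  have hcpos : 0 < c := by
    have := Real.rpow_pos_of_pos hlpos ((N:ℝ)/2)
    positivity
  set u := fun x => c * φ (l • x) with hudef
  -- smoothness
  have hu_cd : ContDiff ℝ 2 u := by
    have : u = c • (φ ∘ (l • ContinuousLinearMap.id ℝ (EuclideanSpace ℝ (Fin N)))) := rfl
    rw [this]
    exact (hφsm.comp (ContinuousLinearMap.contDiff _)).const_smul c
  -- compact support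
  have hhomeo : ∀ g : EuclideanSpace ℝ (Fin N) → ℝ, HasCompactSupport g →
      HasCompactSupport (fun x => g (l • x)) := by
    intro g hg
    have h2 : HasCompactSupport (g ∘ (Homeomorph.smulOfNeZero l hlpos.ne' :
        EuclideanSpace ℝ (Fin N) ≃ₜ EuclideanSpace ℝ (Fin N))) := hg.comp_homeomorph _
    exact h2
  have hu_supp : HasCompactSupport u := by
    apply (hhomeo φ hφs).mono
    intro x hx
    simp only [Function.mem_support, hudef] at hx ⊢
    intro h
    exact hx (by simp [h])
  -- norms
  have hconst_abs : |c| = c := abs_of_pos hcpos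
  have hu_L2 : lpnorm 2 u = a := by
    rw [hudef, lpnorm_const_mul 2 c (fun x => φ (l • x)),
      lpnorm_scale 2 two_pos φ hφc hlpos, hconst_abs, hcdef]
    have hll : l ^ ((N:ℝ)/2) * l ^ (-(N:ℝ)/2) = 1 := by
      rw [← Real.rpow_add hlpos, show (N:ℝ)/2 + -(N:ℝ)/2 = 0 by ring, Real.rpow_zero]
    field_simp
    rw [neg_div] at hll
    linear_combination m2 * hll
  have hu_Lp : lpnorm p u = (a * mp / m2) * l ^ ((N:ℝ)/2 + -(N:ℝ)/p) := by
    rw [hudef, lpnorm_const_mul p c (fun x => φ (l • x)),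
      lpnorm_scale p hp0 φ hφc hlpos, hconst_abs, hcdef,
      Real.rpow_add hlpos]
    ring
  have hlapu : lap u = fun x => (c * l ^ (2:ℕ)) * lap φ (l • x) := by
    funext x
    rw [hudef]
    rw [lap_smul_comp hφsm c l x]
  have hu_lap2 : lpnorm 2 (lap u) = (a * d / m2) * l ^ (2:ℕ) := by
    rw [hlapu, lpnorm_const_mul 2 _ (fun x => lap φ (l • x)),
      lpnorm_scale 2 two_pos (lap φ) (lap_continuous hφsm) hlpos,
      abs_of_pos (by positivity : (0:ℝ) < c * l ^ (2:ℕ)), hcdef]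
    have hll : l ^ ((N:ℝ)/2) * l ^ (-(N:ℝ)/2) = 1 := by
      rw [← Real.rpow_add hlpos, show (N:ℝ)/2 + -(N:ℝ)/2 = 0 by ring, Real.rpow_zero]
    field_simp
    rw [← hddef]
    rw [neg_div] at hll
    linear_combination d * hll
  -- membership in H²
  have hu_H2 : inH2 u := by
    refine ⟨hu_cd, hu_cd.continuous.memLp_of_hasCompactSupport hu_supp, ?_⟩
    have hlapc : Continuous (lap u) := lap_continuous hu_cd
    have hlaps : HasCompactSupport (lap u) := by
      rw [hlapu]
      apply (hhomeo (lap φ) (lap_hasCompactSupport hφs)).mono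
      intro x hx
      simp only [Function.mem_support] at hx ⊢
      intro h
      exact hx (by simp [h])
    exact hlapc.memLp_of_hasCompactSupport hlaps
  clear_value u c l l0 K2 K1 s d mp m2 φ ψ
  -- energy value
  have hterm1 : (1/2) * lpnorm 2 (lap u) ^ 2 = K1 * l ^ ((4:ℝ)) := by
    rw [hu_lap2, hK1]
    rw [show l ^ ((4:ℝ)) = l ^ (4:ℕ) by rw [← Real.rpow_natCast l 4]; norm_num]
    ring
  have hterm2 : (1/p) * lpnorm p u ^ p = K2 * l ^ s := by
    rw [hu_Lp, hK2, Real.mul_rpow hbase.le (Real.rpow_nonneg hlpos.le _),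
      ← Real.rpow_mul hlpos.le]
    have hexp : ((N:ℝ)/2 + -(N:ℝ)/p) * p = s := by
      rw [hs]; field_simp; ring
    rw [hexp]
    ring
  -- the key bound
  have hls_pos : 0 < l ^ s := Real.rpow_pos_of_pos hlpos _
  have hle : l ^ ((4:ℝ) - s) ≤ K2 / (K1 + 1) := hl4s ▸ hl0le
  have hsplit : l ^ ((4:ℝ)) = l ^ s * l ^ ((4:ℝ) - s) := by
    rw [← Real.rpow_add hlpos]; ring_nf
  have key : K1 * l ^ ((4:ℝ)) < K2 * l ^ s := by
    rw [hsplit]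
    have h1 : K1 * (l ^ s * l ^ ((4:ℝ) - s)) ≤ K1 * (l ^ s * (K2 / (K1 + 1))) :=
      mul_le_mul_of_nonneg_left
        (mul_le_mul_of_nonneg_left hle hls_pos.le) hK1nn
    have hfrac : K1 / (K1 + 1) < 1 := (div_lt_one (by linarith)).2 (by linarith)
    have h2 : K1 * (l ^ s * (K2 / (K1 + 1))) < K2 * l ^ s := by
      have heq : K1 * (l ^ s * (K2 / (K1 + 1))) = (K1 / (K1 + 1)) * (K2 * l ^ s) := by
        ring
      rw [heq]
      have hpos : 0 < K2 * l ^ s := mul_pos hK2pos hls_pos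
      calc (K1/(K1+1)) * (K2 * l ^ s) < 1 * (K2 * l ^ s) :=
            mul_lt_mul_of_pos_right hfrac hpos
        _ = K2 * l ^ s := one_mul _
    exact lt_of_le_of_lt h1 h2
  have hJu : (1/2) * lpnorm 2 (lap u) ^ 2 - (1/p) * lpnorm p u ^ p < 0 := by
    rw [hterm1, hterm2]
    exact sub_neg.mpr key
  exact lt_of_le_of_lt (csInf_le ⟨M, hbdd⟩ ⟨u, ⟨hu_H2, hu_L2⟩, rfl⟩) hJu
end
end

section
/- Let N ≥ 2, 2 < p < 2 + 8/N, c > 0, θ > 1, and define m_{p,c} := inf{ J_p(u) : u ∈ H²(ℝ^N), ‖u‖_2 = c } with J_p(u) = (1/2)‖Δu‖_2² − (1/p)‖u‖_p^p. If −∞ < m_{p,c} < 0, then m_{p,θc} < θ² m_{p,c}. -/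
open MeasureTheory Filter Set

noncomputable section

/-- The ground state energy at mass `c`:
`m_{p,c} = inf { (1/2)‖Δu‖₂² - (1/p)‖u‖_p^p : u ∈ H²(ℝ^N), ‖u‖₂ = c }`. -/
def gsEnergy (N : ℕ) (p c : ℝ) : ℝ :=
  sInf ((fun u : EuclideanSpace ℝ (Fin N) → ℝ =>
      (1 / 2) * lpnorm 2 (lap u) ^ 2 - (1 / p) * lpnorm p u ^ p) ''
      {u | inH2 u ∧ lpnorm 2 u = c})

open scoped ENNReal

lemma lap_continuous {N : ℕ} {v : EuclideanSpace ℝ (Fin N) → ℝ} (hv : ContDiff ℝ 2 v) :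
    Continuous (lap v) := by
  apply continuous_finset_sum
  intro i _
  exact (continuous_eval_const _).comp (hv.continuous_iteratedFDeriv le_rfl)

lemma lap_scale {N : ℕ} {v : EuclideanSpace ℝ (Fin N) → ℝ} (hv : ContDiff ℝ 2 v) (a b : ℝ)
    (x : EuclideanSpace ℝ (Fin N)) :
    lap (fun y => a * v (b • y)) x = (a * b ^ 2) * lap v (b • x) := by
  set L : EuclideanSpace ℝ (Fin N) →L[ℝ] EuclideanSpace ℝ (Fin N) :=
    b • ContinuousLinearMap.id ℝ _ with hL
  have hvL : ContDiff ℝ 2 (v ∘ L) := hv.comp L.contDiff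
  have key : ∀ w : Fin 2 → EuclideanSpace ℝ (Fin N),
      iteratedFDeriv ℝ 2 (fun y => a * v (b • y)) x w
        = (a * b ^ 2) * iteratedFDeriv ℝ 2 v (b • x) w := by
    intro w
    have h1 : (fun y => a * v (b • y)) = a • (v ∘ L) := rfl
    rw [h1, iteratedFDeriv_const_smul_apply hvL.contDiffAt,
      ContinuousMultilinearMap.smul_apply]
    rw [L.iteratedFDeriv_comp_right hv x le_rfl,
      ContinuousMultilinearMap.compContinuousLinearMap_apply]
    have h2 : (fun i => L (w i)) = fun i => b • (w i) := rfl
    rw [h2]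
    rw [ContinuousMultilinearMap.map_smul_univ]
    simp [smul_eq_mul, Finset.prod_const]
    ring_nf
    rfl
  unfold lap
  rw [Finset.mul_sum]
  exact Finset.sum_congr rfl fun i _ => key _

lemma eLpNorm_comp_smul {N : ℕ} {v : EuclideanSpace ℝ (Fin N) → ℝ} (hv : Continuous v) {b : ℝ}
    (hb : 0 < b) {q : ℝ} (hq : 0 < q) :
    eLpNorm (fun x : EuclideanSpace ℝ (Fin N) => v (b • x)) (ENNReal.ofReal q) volume
      = ENNReal.ofReal (b ^ (-((N : ℝ) / q))) * eLpNorm v (ENNReal.ofReal q) volume := by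
  have hmap : Measure.map (b • ·) (volume : Measure (EuclideanSpace ℝ (Fin N)))
      = ENNReal.ofReal |(b ^ Module.finrank ℝ (EuclideanSpace ℝ (Fin N)))⁻¹| • volume :=
    Measure.map_addHaar_smul _ hb.ne'
  have h1 : eLpNorm (fun x : EuclideanSpace ℝ (Fin N) => v (b • x)) (ENNReal.ofReal q) volume
      = eLpNorm v (ENNReal.ofReal q) (Measure.map (b • ·) volume) := by
    rw [eLpNorm_map_measure (hv.aestronglyMeasurable) (measurable_const_smul b).aemeasurable]
    rfl
  rw [h1, hmap, eLpNorm_smul_measure_of_ne_top ENNReal.ofReal_ne_top]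
  have hq' : ((1 : ℝ≥0∞) / ENNReal.ofReal q).toReal = q⁻¹ := by
    rw [one_div, ENNReal.toReal_inv, ENNReal.toReal_ofReal hq.le]
  rw [hq', smul_eq_mul]
  congr 1
  rw [finrank_euclideanSpace_fin]
  rw [ENNReal.ofReal_rpow_of_pos (by positivity)]
  congr 1
  rw [abs_of_pos (by positivity), ← Real.rpow_natCast b N, ← Real.rpow_neg hb.le,
    ← Real.rpow_mul hb.le]
  congr 1
  field_simp

lemma eLpNorm_scale {N : ℕ} {v : EuclideanSpace ℝ (Fin N) → ℝ} (hv : Continuous v) (a : ℝ)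
    {b : ℝ} (hb : 0 < b) {q : ℝ} (hq : 0 < q) :
    eLpNorm (fun x : EuclideanSpace ℝ (Fin N) => a * v (b • x)) (ENNReal.ofReal q) volume
      = (‖a‖₊ : ℝ≥0∞) * (ENNReal.ofReal (b ^ (-((N : ℝ) / q)))
          * eLpNorm v (ENNReal.ofReal q) volume) := by
  have h1 : (fun x : EuclideanSpace ℝ (Fin N) => a * v (b • x))
      = a • (fun x : EuclideanSpace ℝ (Fin N) => v (b • x)) := rfl
  rw [h1, eLpNorm_const_smul, eLpNorm_comp_smul hv hb hq, enorm_eq_nnnorm]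

lemma lpnorm_scale {N : ℕ} {v : EuclideanSpace ℝ (Fin N) → ℝ} (hv : Continuous v) (a : ℝ)
    {b : ℝ} (hb : 0 < b) {q : ℝ} (hq : 0 < q) :
    lpnorm q (fun x : EuclideanSpace ℝ (Fin N) => a * v (b • x))
      = |a| * b ^ (-((N : ℝ) / q)) * lpnorm q v := by
  rw [lpnorm, eLpNorm_scale hv a hb hq, ENNReal.toReal_mul, ENNReal.toReal_mul,
    ENNReal.coe_toReal, coe_nnnorm, ENNReal.toReal_ofReal (by positivity), Real.norm_eq_abs,
    lpnorm, mul_assoc]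

lemma two_ofReal : (ENNReal.ofReal (2:ℝ)) = 2 := by
  norm_num

lemma inH2_scale {N : ℕ} {v : EuclideanSpace ℝ (Fin N) → ℝ} (hv : inH2 v) (a : ℝ) {b : ℝ}
    (hb : 0 < b) : inH2 (fun x => a * v (b • x)) := by
  have hcont : Continuous v := hv.1.continuous
  have hsm : ContDiff ℝ 2 fun x : EuclideanSpace ℝ (Fin N) => b • x :=
    contDiff_id.const_smul b
  refine ⟨contDiff_const.mul (hv.1.comp hsm), ?_, ?_⟩
  · refine ⟨(continuous_const.mul (hcont.comp (continuous_const_smul b))).aestronglyMeasurable, ?_⟩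
    have heq := eLpNorm_scale hcont a hb (q := 2) (by norm_num)
    rw [two_ofReal] at heq
    rw [heq]
    have := hv.2.1.2
    exact ENNReal.mul_lt_top ENNReal.coe_lt_top (ENNReal.mul_lt_top ENNReal.ofReal_lt_top this)
  · have hlap : (fun x => lap (fun y => a * v (b • y)) x)
        = fun x => (a * b ^ 2) * lap v (b • x) := funext (lap_scale hv.1 a b)
    rw [hlap]
    have hlc : Continuous (lap v) := lap_continuous hv.1
    refine ⟨(continuous_const.mul (hlc.comp (continuous_const_smul b))).aestronglyMeasurable, ?_⟩
    have heq := eLpNorm_scale hlc (a * b ^ 2) hb (q := 2) (by norm_num)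
    rw [two_ofReal] at heq
    rw [heq]
    have := hv.2.2.2
    exact ENNReal.mul_lt_top ENNReal.coe_lt_top (ENNReal.mul_lt_top ENNReal.ofReal_lt_top this)

/-- Value of the energy functional on the rescaled function. -/
lemma J_scale_eq {N : ℕ} {p : ℝ} (hp : 2 < p) {v : EuclideanSpace ℝ (Fin N) → ℝ}
    (hv : inH2 v) {a b : ℝ} (ha : 0 < a) (hb : 0 < b) :
    (1 / 2) * lpnorm 2 (lap (fun x => a * v (b • x))) ^ 2
      - (1 / p) * lpnorm p (fun x => a * v (b • x)) ^ p
    = (a * b ^ 2 * b ^ (-((N : ℝ) / 2))) ^ 2 * ((1 / 2) * lpnorm 2 (lap v) ^ 2)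
      - (a * b ^ (-((N : ℝ) / p))) ^ p * ((1 / p) * lpnorm p v ^ p) := by
  have hp0 : (0:ℝ) < p := by linarith
  have hlap : (fun x => lap (fun y => a * v (b • y)) x)
      = fun x => (a * b ^ 2) * lap v (b • x) := funext (lap_scale hv.1 a b)
  have h1 : lpnorm 2 (lap fun x => a * v (b • x))
      = (a * b ^ 2) * b ^ (-((N : ℝ) / 2)) * lpnorm 2 (lap v) := by
    rw [show (lap fun x => a * v (b • x)) = fun x => (a * b ^ 2) * lap v (b • x) from hlap,
      lpnorm_scale (lap_continuous hv.1) _ hb (q := 2) (by norm_num), abs_of_pos (by positivity)]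
  have h2 : lpnorm p (fun x => a * v (b • x))
      = a * b ^ (-((N : ℝ) / p)) * lpnorm p v := by
    rw [lpnorm_scale hv.1.continuous _ hb hp0, abs_of_pos ha]
  rw [h1, h2]
  have hZ : 0 ≤ lpnorm p v := ENNReal.toReal_nonneg
  have hκ : (0:ℝ) < a * b ^ (-((N : ℝ) / p)) := by positivity
  rw [Real.mul_rpow hκ.le hZ]
  ring

set_option maxHeartbeats 2000000 in
/-- For `N ≥ 2`, `2 < p < 2 + 8/N`, `c > 0`, `θ > 1`: if `-∞ < m_{p,c} < 0`
then `m_{p,θc} < θ² m_{p,c}` (strict sub-homogeneity of the ground state energy). -/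
theorem gsEnergy_strict_subhomogeneous (N : ℕ) (hN : 2 ≤ N) (p c θ : ℝ)
    (hp : 2 < p) (hp' : p < 2 + 8 / N) (hc : 0 < c) (hθ : 1 < θ)
    (hbdd : BddBelow ((fun u : EuclideanSpace ℝ (Fin N) → ℝ =>
        (1 / 2) * lpnorm 2 (lap u) ^ 2 - (1 / p) * lpnorm p u ^ p) ''
        {u | inH2 u ∧ lpnorm 2 u = c}))
    (hneg : gsEnergy N p c < 0) :
    gsEnergy N p (θ * c) < θ ^ 2 * gsEnergy N p c := by
  have hθ0 : (0:ℝ) < θ := lt_trans one_pos hθ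
  have hp0 : (0:ℝ) < p := by linarith
  have hN0 : (0:ℝ) < (N:ℝ) := by
    have : 0 < N := by omega
    exact_mod_cast this
  have he : (0:ℝ) < 4 - (N:ℝ)*(p-2)/2 := by
    have h1 : p - 2 < 8/(N:ℝ) := by linarith
    have h8 : (N:ℝ)*(p-2) < 8 := by
      calc (N:ℝ)*(p-2) < (N:ℝ)*(8/(N:ℝ)) := mul_lt_mul_of_pos_left h1 hN0
      _ = 8 := by field_simp
    linarith
  set e : ℝ := 4 - (N:ℝ)*(p-2)/2 with hedef
  set s : ℝ := (2-p)/e with hsdef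
  set b : ℝ := θ ^ s with hbdef
  have hb : 0 < b := Real.rpow_pos_of_pos hθ0 s
  set a : ℝ := θ⁻¹ * b ^ ((N:ℝ)/2) with hadef
  have ha : 0 < a := by positivity
  have hbpow : ∀ r : ℝ, b ^ r = θ ^ (s*r) := fun r => by
    rw [hbdef, ← Real.rpow_mul hθ0.le]
  have hbcancel : b ^ ((N:ℝ)/2) * b ^ (-((N:ℝ)/2)) = 1 := by
    rw [← Real.rpow_add hb]; simp
  have hI1 : a * b ^ (-((N:ℝ)/2)) * θ = 1 := by
    calc a * b ^ (-((N:ℝ)/2)) * θ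
        = (b ^ ((N:ℝ)/2) * b ^ (-((N:ℝ)/2))) * (θ⁻¹ * θ) := by rw [hadef]; ring
      _ = 1 := by rw [hbcancel, inv_mul_cancel₀ hθ0.ne']; norm_num
  have hI2 : a * b^2 * b ^ (-((N:ℝ)/2)) = θ⁻¹ * b^2 := by
    calc a * b^2 * b ^ (-((N:ℝ)/2))
        = (b ^ ((N:ℝ)/2) * b ^ (-((N:ℝ)/2))) * (θ⁻¹ * b^2) := by rw [hadef]; ring
      _ = θ⁻¹ * b^2 := by rw [hbcancel, one_mul]
  set K : ℝ := (θ⁻¹ * b^2)^2 with hKdef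
  have hK : 0 < K := by positivity
  have hene : (4 - (N:ℝ)*(p-2)/2) ≠ 0 := by rw [← hedef]; exact he.ne'
  have hb2 : b^(2:ℕ) = θ^(s*2) := by
    rw [← Real.rpow_natCast b 2, hbpow]
    norm_num
  have hI3 : (a * b ^ (-((N:ℝ)/p)))^p = K := by
    have h1 : a * b ^ (-((N:ℝ)/p)) = θ ^ (-1 + s*((N:ℝ)/2) + s*(-((N:ℝ)/p))) := by
      rw [hadef, hbpow ((N:ℝ)/2), hbpow (-((N:ℝ)/p)), Real.rpow_add hθ0,
        Real.rpow_add hθ0, Real.rpow_neg_one]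
      try ring
    have h2 : K = θ ^ ((-1 + s*2) * 2) := by
      rw [hKdef, hb2, ← Real.rpow_neg_one θ, ← Real.rpow_add hθ0,
        ← Real.rpow_natCast (θ ^ (-1 + s*2)) 2, ← Real.rpow_mul hθ0.le]
      norm_num
    rw [h1, h2, ← Real.rpow_mul hθ0.le]
    congr 1
    have hs' : s * e = 2 - p := by rw [hsdef]; field_simp
    rw [hedef] at hs'
    have hpp : (N:ℝ)/p * p = N := div_mul_cancel₀ _ hp0.ne'
    linear_combination (-1) * hs' + (-s) * hpp
  -- the rescaling map sends mass θ*c functions to mass c functions and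
  -- multiplies the energy by K
  have hmass : ∀ v : EuclideanSpace ℝ (Fin N) → ℝ, inH2 v → lpnorm 2 v = θ * c →
      lpnorm 2 (fun x => a * v (b • x)) = c := by
    intro v hvH hvm
    rw [lpnorm_scale hvH.1.continuous a hb (q := 2) (by norm_num), abs_of_pos ha, hvm]
    calc a * b ^ (-((N:ℝ)/2)) * (θ * c) = (a * b ^ (-((N:ℝ)/2)) * θ) * c := by ring
      _ = c := by rw [hI1, one_mul]
  have hJs : ∀ v : EuclideanSpace ℝ (Fin N) → ℝ, inH2 v →
      (1 / 2) * lpnorm 2 (lap (fun x => a * v (b • x))) ^ 2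
        - (1 / p) * lpnorm p (fun x => a * v (b • x)) ^ p
      = K * ((1 / 2) * lpnorm 2 (lap v) ^ 2 - (1 / p) * lpnorm p v ^ p) := by
    intro v hvH
    rw [J_scale_eq hp hvH ha hb, hI2, hI3, hKdef]
    ring
  -- BddBelow at mass θ*c
  have hbddθ : BddBelow ((fun u : EuclideanSpace ℝ (Fin N) → ℝ =>
      (1 / 2) * lpnorm 2 (lap u) ^ 2 - (1 / p) * lpnorm p u ^ p) ''
      {u | inH2 u ∧ lpnorm 2 u = θ * c}) := by
    refine ⟨K⁻¹ * gsEnergy N p c, ?_⟩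
    rintro y ⟨v, ⟨hvH, hvm⟩, rfl⟩
    have hmem : (fun x => a * v (b • x)) ∈
        {u : EuclideanSpace ℝ (Fin N) → ℝ | inH2 u ∧ lpnorm 2 u = c} :=
      ⟨inH2_scale hvH a hb, hmass v hvH hvm⟩
    have hle : gsEnergy N p c ≤
        (1 / 2) * lpnorm 2 (lap (fun x => a * v (b • x))) ^ 2
          - (1 / p) * lpnorm p (fun x => a * v (b • x)) ^ p :=
      csInf_le hbdd ⟨_, hmem, rfl⟩
    rw [hJs v hvH] at hle
    calc K⁻¹ * gsEnergy N p c
        ≤ K⁻¹ * (K * ((1 / 2) * lpnorm 2 (lap v) ^ 2 - (1 / p) * lpnorm p v ^ p)) :=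
          mul_le_mul_of_nonneg_left hle (inv_nonneg.mpr hK.le)
      _ = (1 / 2) * lpnorm 2 (lap v) ^ 2 - (1 / p) * lpnorm p v ^ p := by
          field_simp
  -- nonemptiness at mass c
  have hne : ((fun u : EuclideanSpace ℝ (Fin N) → ℝ =>
      (1 / 2) * lpnorm 2 (lap u) ^ 2 - (1 / p) * lpnorm p u ^ p) ''
      {u | inH2 u ∧ lpnorm 2 u = c}).Nonempty := by
    by_contra h
    rw [Set.not_nonempty_iff_eq_empty] at h
    have h0 : gsEnergy N p c = 0 := by
      unfold gsEnergy
      rw [h, Real.sInf_empty]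
    linarith
  set T : ℝ := θ ^ p with hTdef
  have hT0 : 0 < T := Real.rpow_pos_of_pos hθ0 p
  have hT2 : θ^(2:ℕ) < T := by
    rw [hTdef, ← Real.rpow_natCast θ 2]
    exact Real.rpow_lt_rpow_of_exponent_lt hθ (by push_cast; linarith)
  set A : ℝ := T - θ^2 with hAdef
  have hA : 0 < A := by rw [hAdef]; linarith
  set m : ℝ := gsEnergy N p c with hmdef
  set ε : ℝ := A*(-m)/(2*T) with hεdef
  have hε : 0 < ε := by
    have hm0 : 0 < -m := by rw [hmdef]; linarith [hneg]
    positivity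
  have hm0 : 0 < -m := by rw [hmdef]; linarith [hneg]
  have hlt : gsEnergy N p c < m + ε := by rw [← hmdef]; linarith
  obtain ⟨y, hyS, hylt⟩ := exists_lt_of_csInf_lt hne hlt
  obtain ⟨u, ⟨huH, hum⟩, rfl⟩ := hyS
  set X : ℝ := lpnorm 2 (lap u) with hXdef
  set Z : ℝ := lpnorm p u with hZdef
  have hju : (1/2) * X^2 - (1/p) * Z^p < m + ε := hylt
  -- the rescaled competitor θ • u
  have h1smul : (fun x : EuclideanSpace ℝ (Fin N) => θ * u x)
      = fun x => θ * u ((1:ℝ) • x) := by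
    funext x; rw [one_smul]
  have hmemθ : (fun x : EuclideanSpace ℝ (Fin N) => θ * u x) ∈
      {v : EuclideanSpace ℝ (Fin N) → ℝ | inH2 v ∧ lpnorm 2 v = θ * c} := by
    constructor
    · rw [h1smul]; exact inH2_scale huH θ one_pos
    · rw [h1smul, lpnorm_scale huH.1.continuous θ one_pos (by norm_num : (0:ℝ) < 2)]
      simp [Real.one_rpow, abs_of_pos hθ0, hum]
  have hJθ : (1 / 2) * lpnorm 2 (lap (fun x : EuclideanSpace ℝ (Fin N) => θ * u x)) ^ 2
      - (1 / p) * lpnorm p (fun x : EuclideanSpace ℝ (Fin N) => θ * u x) ^ p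
      = θ^2 * ((1/2) * X^2) - T * ((1/p) * Z^p) := by
    rw [h1smul, J_scale_eq hp huH hθ0 one_pos, hTdef, hXdef, hZdef]
    simp only [Real.one_rpow, one_pow, mul_one]
    try ring
  have hle2 : gsEnergy N p (θ * c) ≤ θ^2 * ((1/2) * X^2) - T * ((1/p) * Z^p) := by
    rw [← hJθ]
    exact csInf_le hbddθ ⟨_, hmemθ, rfl⟩
  have hX2 : (0:ℝ) ≤ (1/2) * X^2 := by positivity
  have hZp : (1/p) * Z^p > -m - ε := by linarith
  have e3 : T = θ^2 + A := by rw [hAdef]; ring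
  have e1' := mul_lt_mul_of_pos_left hju (pow_pos hθ0 2)
  have e2' := mul_lt_mul_of_pos_left hZp hA
  have hεT : ε * T = A*(-m)/2 := by
    rw [hεdef]; field_simp
  have hεT' : ε*θ^2 + ε*A = A*(-m)/2 := by
    rw [← hεT, e3]; ring
  have e4 : T * ((1/p) * Z^p) = θ^2*((1/p) * Z^p) + A*((1/p) * Z^p) := by
    rw [e3]; ring
  have key : θ^2 * ((1/2) * X^2) - T * ((1/p) * Z^p) < θ^2*m + A*m/2 := by
    linarith [e1', e2', hεT', e4]
  have hfin : θ^2*m + A*m/2 < θ^2*m := by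
    have hAm : A*m < 0 := mul_neg_of_pos_of_neg hA hneg
    have h5 : A*m/2 < 0 := div_neg_of_neg_of_pos hAm two_pos
    simpa using add_lt_add_left h5 (θ^2*m)
  calc gsEnergy N p (θ * c) ≤ θ^2 * ((1/2) * X^2) - T * ((1/p) * Z^p) := hle2
    _ < θ^2*m + A*m/2 := key
    _ < θ^2*m := hfin
end
end

section
/- Let N ≥ 2, 2 < p < 2 + 8/N, and let a₁, a₂ > 0 with a₁² + a₂² = a². If m_{p,θc} < θ² m_{p,c} for all c > 0 and θ > 1, and m_{p,c} < 0 for all c > 0, then m_{p,a} < m_{p,a₁} + m_{p,a₂}. -/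
open MeasureTheory Filter Set

noncomputable section

/-- Strict subadditivity of the ground state energy: for `N ≥ 2`, `2 < p < 2 + 8/N`,
`a₁, a₂ > 0` with `a₁² + a₂² = a²` (`a > 0`), if `m_{p,θc} < θ² m_{p,c}` for all `c > 0`,
`θ > 1`, and `m_{p,c} < 0` for all `c > 0`, then `m_{p,a} < m_{p,a₁} + m_{p,a₂}`. -/
theorem gsEnergy_strict_subadditive (N : ℕ) (hN : 2 ≤ N) (p a a₁ a₂ : ℝ)
    (hp : 2 < p) (hp' : p < 2 + 8 / N)
    (ha : 0 < a) (ha₁ : 0 < a₁) (ha₂ : 0 < a₂) (hsum : a₁ ^ 2 + a₂ ^ 2 = a ^ 2)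
    (hsub : ∀ c > (0 : ℝ), ∀ θ > (1 : ℝ), gsEnergy N p (θ * c) < θ ^ 2 * gsEnergy N p c)
    (hneg : ∀ c > (0 : ℝ), gsEnergy N p c < 0) :
    gsEnergy N p a < gsEnergy N p a₁ + gsEnergy N p a₂ := by
  wlog h : a₂ ≤ a₁ generalizing a₁ a₂ with H
  · rw [add_comm]
    exact H a₂ a₁ ha₂ ha₁ (by linarith) (le_of_not_ge h)
  have hθ : (1 : ℝ) < a / a₁ := by
    rw [lt_div_iff₀ ha₁, one_mul]
    nlinarith [sq_nonneg a₂]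
  have key : gsEnergy N p a < (a / a₁) ^ 2 * gsEnergy N p a₁ := by
    have := hsub a₁ ha₁ (a / a₁) hθ
    rwa [div_mul_cancel₀ _ (ne_of_gt ha₁)] at this
  have hratio : (a / a₁) ^ 2 = 1 + a₂ ^ 2 / a₁ ^ 2 := by
    field_simp
    nlinarith
  have h2 : (a₂ ^ 2 / a₁ ^ 2) * gsEnergy N p a₁ ≤ gsEnergy N p a₂ := by
    rcases eq_or_lt_of_le h with heq | hlt
    · rw [heq, div_self (by positivity), one_mul]
    · have hθ' : (1 : ℝ) < a₁ / a₂ := by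
        rw [lt_div_iff₀ ha₂, one_mul]; exact hlt
      have := hsub a₂ ha₂ (a₁ / a₂) hθ'
      rw [div_mul_cancel₀ _ (ne_of_gt ha₂)] at this
      have hpos : (0 : ℝ) < a₂ ^ 2 / a₁ ^ 2 := by positivity
      have := mul_lt_mul_of_pos_left this hpos
      refine le_of_lt ?_
      calc (a₂ ^ 2 / a₁ ^ 2) * gsEnergy N p a₁ < (a₂ ^ 2 / a₁ ^ 2) * ((a₁ / a₂) ^ 2 * gsEnergy N p a₂) := this
        _ = gsEnergy N p a₂ := by field_simp
  calc gsEnergy N p a < (a / a₁) ^ 2 * gsEnergy N p a₁ := key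
    _ = gsEnergy N p a₁ + (a₂ ^ 2 / a₁ ^ 2) * gsEnergy N p a₁ := by rw [hratio]; ring
    _ ≤ gsEnergy N p a₁ + gsEnergy N p a₂ := by linarith
end
end

section
/- Let N ≥ 2, 2 < q < p̄ := 2 + 8/N < p < 2N/(N-4)⁺, μ > 0, a > 0. Define h(t) := (1/2)t − (B_{N,p}a^{p−N(p−2)/4}/p) t^{N(p−2)/8} − (μ B_{N,q}a^{q−N(q−2)/4}/q) t^{N(q−2)/8} for t > 0. If μ a^{γ(p,q)} < (p(p̄−q)/(2B_{N,p}(p−q)))^{(p̄−q)/(p−p̄)} · (q(p−p̄)/(2B_{N,q}(p−q))), where γ(p,q) = ((p̄−q)/(p−p̄))(p − N(p−2)/4) + (q − N(q−2)/4), then there exist 0 < R₀ < R₁ such that h(R₀) = h(R₁) = 0 and h(t) > 0 if and only if t ∈ (R₀, R₁); moreover h has exactly two critical points on (0,∞): a local strict minimum at negative level in (0,R₀) and a global strict maximum at positive level in (R₀,R₁). -/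
open Set Filter

set_option maxHeartbeats 2000000 in
lemma geom_main (c d α β : ℝ) (hc : 0 < c) (hd : 0 < d) (hα0 : 0 < α) (hα1 : α < 1)
    (hβ : 1 < β) (h : ℝ → ℝ)
    (hh : h = fun t => (1 / 2 : ℝ) * t - c * t ^ β - d * t ^ α)
    (u : ℝ) (hu0 : 0 < u) (hupos : 0 < h u) :
    ∃ R₀ R₁ : ℝ, 0 < R₀ ∧ R₀ < R₁ ∧ h R₀ = 0 ∧ h R₁ = 0 ∧
      (∀ t > (0 : ℝ), (0 < h t ↔ t ∈ Ioo R₀ R₁)) ∧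
      ∃ t₁ ∈ Ioo 0 R₀, ∃ t₂ ∈ Ioo R₀ R₁,
        (∀ t > (0 : ℝ), (deriv h t = 0 ↔ t = t₁ ∨ t = t₂)) ∧
        h t₁ < 0 ∧ (∀ s ∈ Ioo (0 : ℝ) R₀, s ≠ t₁ → h t₁ < h s) ∧
        0 < h t₂ ∧ (∀ s > (0 : ℝ), s ≠ t₂ → h s < h t₂) := by
  have hαβ : α < β := hα1.trans hβ
  have hβ1 : (0:ℝ) < β - 1 := by linarith
  have hβ1ne : β - 1 ≠ 0 := ne_of_gt hβ1
  -- root helper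
  have hroot : ∀ {A : ℝ}, 0 < A → (A ^ (1/(β-1))) ^ (β-1) = A := by
    intro A hA
    rw [← Real.rpow_mul hA.le, one_div_mul_cancel hβ1ne, Real.rpow_one]
  have hpow_lt : ∀ {x y : ℝ}, 0 ≤ x → x < y → x ^ (β-1) < y ^ (β-1) :=
    fun hx hxy => Real.rpow_lt_rpow hx hxy hβ1
  -- derivative of h
  have hder : ∀ t : ℝ, 0 < t →
      HasDerivAt h (1/2 - c*β*t^(β-1) - d*α*t^(α-1)) t := by
    intro t ht
    rw [hh]
    have h1 : HasDerivAt (fun t:ℝ => t ^ β) (β * t^(β-1)) t :=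
      Real.hasDerivAt_rpow_const (Or.inl ht.ne')
    have h2 : HasDerivAt (fun t:ℝ => t ^ α) (α * t^(α-1)) t :=
      Real.hasDerivAt_rpow_const (Or.inl ht.ne')
    have H := (((hasDerivAt_id' (x := t)).const_mul (1/2:ℝ)).sub
      (h1.const_mul c)).sub (h2.const_mul d)
    exact H.congr_deriv (by ring)
  have hconth : ∀ t : ℝ, 0 < t → ContinuousAt h t :=
    fun t ht => (hder t ht).continuousAt
  -- the function controlling the derivative sign
  set f : ℝ → ℝ := fun t => (1/2) * t^(1-α) - (c*β) * t^(β-α) - d*α with hf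
  have hfd : ∀ t : ℝ, 0 < t →
      HasDerivAt f ((1/2)*((1-α)*t^(-α)) - (c*β)*((β-α)*t^(β-α-1))) t := by
    intro t ht
    have h1 : HasDerivAt (fun t:ℝ => t ^ (1-α)) ((1-α) * t^(1-α-1)) t :=
      Real.hasDerivAt_rpow_const (Or.inl ht.ne')
    have h2 : HasDerivAt (fun t:ℝ => t ^ (β-α)) ((β-α) * t^(β-α-1)) t :=
      Real.hasDerivAt_rpow_const (Or.inl ht.ne')
    have H := (((h1.const_mul (1/2:ℝ)).sub (h2.const_mul (c*β))).sub_const (d*α))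
    rw [hf]
    exact H.congr_deriv (by ring_nf)
  have hcontf : ∀ t : ℝ, 0 < t → ContinuousAt f t :=
    fun t ht => (hfd t ht).continuousAt
  -- rewrite deriv f
  have hk : (0:ℝ) < c*β*(β-α) := mul_pos (mul_pos hc (by linarith)) (by linarith)
  set A : ℝ := ((1-α)/2) / (c*β*(β-α)) with hA_def
  have hA : 0 < A := div_pos (by linarith) hk
  have hderivf : ∀ x : ℝ, 0 < x →
      deriv f x = x^(-α) * ((1-α)/2 - (c*β*(β-α))*x^(β-1)) := by
    intro x hx
    rw [(hfd x hx).deriv]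
    have e2 : x^(β-α-1) = x^(-α) * x^(β-1) := by
      rw [← Real.rpow_add hx]; ring_nf
    rw [e2]; ring
  set s : ℝ := A ^ (1/(β-1)) with hs_def
  have hs0 : 0 < s := Real.rpow_pos_of_pos hA _
  have hsA : s ^ (β-1) = A := hroot hA
  -- f is strictly monotone on (0,s] and strictly anti on [s,∞)
  have fmono : StrictMonoOn f (Ioc 0 s) := by
    apply strictMonoOn_of_deriv_pos (convex_Ioc 0 s)
      (fun x hx => (hcontf x hx.1).continuousWithinAt)
    intro x hx
    rw [interior_Ioc] at hx
    rw [hderivf x hx.1]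
    have hxA : x^(β-1) < A := hsA ▸ hpow_lt hx.1.le hx.2
    have h2 : (c*β*(β-α))*x^(β-1) < (1-α)/2 := by
      rw [hA_def, lt_div_iff₀ hk] at hxA; linarith [hxA]
    exact mul_pos (Real.rpow_pos_of_pos hx.1 _) (by linarith)
  have fanti : StrictAntiOn f (Ici s) := by
    apply strictAntiOn_of_deriv_neg (convex_Ici s)
      (fun x hx => (hcontf x (hs0.trans_le hx)).continuousWithinAt)
    intro x hx
    rw [interior_Ici] at hx
    have hx0 : 0 < x := hs0.trans hx
    rw [hderivf x hx0]
    have hxA : A < x^(β-1) := hsA ▸ hpow_lt hs0.le hx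
    have h2 : (1-α)/2 < (c*β*(β-α))*x^(β-1) := by
      rw [hA_def, div_lt_iff₀ hk] at hxA; linarith [hxA]
    exact mul_neg_of_pos_of_neg (Real.rpow_pos_of_pos hx0 _) (by linarith)
  -- limits at 0+
  have hf0 : Tendsto f (nhds 0) (nhds (-(d*α))) := by
    have c1 : ContinuousAt (fun t:ℝ => t ^ (1-α)) 0 :=
      Real.continuousAt_rpow_const 0 _ (Or.inr (by linarith))
    have c2 : ContinuousAt (fun t:ℝ => t ^ (β-α)) 0 :=
      Real.continuousAt_rpow_const 0 _ (Or.inr (by linarith))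
    have hcat : ContinuousAt f 0 := by
      rw [hf]
      exact ((c1.const_mul (1/2:ℝ)).sub (c2.const_mul (c*β))).sub
        continuousAt_const
    have h0 : f 0 = -(d*α) := by
      rw [hf]; simp [Real.zero_rpow (by linarith : (1:ℝ)-α ≠ 0),
        Real.zero_rpow (by linarith : β-α ≠ 0)]
    simpa [h0] using hcat.tendsto
  have hh0 : Tendsto h (nhds 0) (nhds 0) := by
    have c1 : ContinuousAt (fun t:ℝ => t ^ β) 0 :=
      Real.continuousAt_rpow_const 0 _ (Or.inr (by linarith))
    have c2 : ContinuousAt (fun t:ℝ => t ^ α) 0 :=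
      Real.continuousAt_rpow_const 0 _ (Or.inr hα0.le)
    have hcat : ContinuousAt h 0 := by
      rw [hh]
      exact ((continuousAt_id.const_mul (1/2:ℝ)).sub (c1.const_mul c)).sub
        (c2.const_mul d)
    have h0 : h 0 = 0 := by
      rw [hh]; simp [Real.zero_rpow (by linarith : β ≠ 0),
        Real.zero_rpow (ne_of_gt hα0)]
    simpa [h0] using hcat.tendsto
  -- deriv h in terms of f
  have hdh : ∀ t : ℝ, 0 < t → deriv h t = t^(α-1) * f t := by
    intro t ht
    rw [(hder t ht).deriv, hf]
    have e1 : t^(α-1) * t^(1-α) = 1 := by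
      rw [← Real.rpow_add ht]; norm_num
    have e2 : t^(α-1) * t^(β-α) = t^(β-1) := by
      rw [← Real.rpow_add ht]; ring_nf
    simp only
    linear_combination (-(1:ℝ)/2) * e1 + (c*β) * e2
  -- a small ε in (0,s) with f ε < 0
  obtain ⟨ε, hεf, hεmem⟩ : ∃ ε : ℝ, f ε < 0 ∧ ε ∈ Ioo 0 s := by
    have hev1 : ∀ᶠ t in nhdsWithin (0:ℝ) (Ioi 0), f t < 0 := by
      apply eventually_nhdsWithin_of_eventually_nhds
      exact hf0.eventually (eventually_lt_nhds (by nlinarith : -(d*α) < 0))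
    have hev2 : ∀ᶠ t in nhdsWithin (0:ℝ) (Ioi 0), t ∈ Ioo 0 s :=
      Filter.eventually_of_mem (Ioo_mem_nhdsGT_of_mem ⟨le_refl 0, hs0⟩) (fun x hx => hx)
    exact (hev1.and hev2).exists
  -- MVT: a point where f is positive
  obtain ⟨ξ, hξmem, hξf⟩ : ∃ ξ : ℝ, 0 < ξ ∧ 0 < f ξ := by
    obtain ⟨ε', hε'h, hε'mem⟩ : ∃ ε' : ℝ, h ε' < h u ∧ ε' ∈ Ioo 0 u := by
      have hev1 : ∀ᶠ t in nhdsWithin (0:ℝ) (Ioi 0), h t < h u := by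
        apply eventually_nhdsWithin_of_eventually_nhds
        exact hh0.eventually (eventually_lt_nhds hupos)
      have hev2 : ∀ᶠ t in nhdsWithin (0:ℝ) (Ioi 0), t ∈ Ioo 0 u :=
        Filter.eventually_of_mem (Ioo_mem_nhdsGT_of_mem ⟨le_refl 0, hu0⟩) (fun x hx => hx)
      exact (hev1.and hev2).exists
    obtain ⟨ξ, hξ, hξd⟩ := exists_deriv_eq_slope h hε'mem.2
      (fun x hx => (hconth x (hε'mem.1.trans_le hx.1)).continuousWithinAt)
      (fun x hx => ((hder x (hε'mem.1.trans hx.1)).differentiableAt).differentiableWithinAt)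
    have hξ0 : 0 < ξ := hε'mem.1.trans hξ.1
    refine ⟨ξ, hξ0, ?_⟩
    have hslope : 0 < (h u - h ε') / (u - ε') :=
      div_pos (by linarith) (by linarith [hξ.2, hε'mem.2])
    rw [hdh ξ hξ0] at hξd
    have hP := Real.rpow_pos_of_pos hξ0 (α-1)
    have hprod : 0 < ξ ^ (α-1) * f ξ := by rw [hξd]; exact hslope
    nlinarith [hprod, hP]
  -- f s > 0
  have hfs : 0 < f s := by
    rcases lt_trichotomy ξ s with hlt | heq | hgt
    · exact hξf.trans (fmono ⟨hξmem, hlt.le⟩ ⟨hs0, le_refl s⟩ hlt)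
    · rwa [heq] at hξf
    · exact hξf.trans (fanti (self_mem_Ici) (le_of_lt hgt) hgt)
  -- a large T with f T < 0
  obtain ⟨T, hsT, hfT⟩ : ∃ T : ℝ, s < T ∧ f T < 0 := by
    set B : ℝ := ((1/2)/(c*β)) ^ (1/(β-1)) with hB_def
    have hB0 : 0 < B := Real.rpow_pos_of_pos (by positivity) _
    refine ⟨max (s+1) (B+1), lt_of_lt_of_le (by linarith) (le_max_left _ _), ?_⟩
    set T := max (s+1) (B+1) with hT_def
    have hT0 : 0 < T := lt_of_lt_of_le (by linarith) (le_max_right _ _)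
    have hTB : B < T := lt_of_lt_of_le (by linarith) (le_max_right _ _)
    have hTpow : (1/2)/(c*β) < T^(β-1) := by
      have := hpow_lt hB0.le hTB
      rwa [hroot (by positivity : (0:ℝ) < (1/2)/(c*β))] at this
    have hsplit : T^(β-α) = T^(1-α) * T^(β-1) := by
      rw [← Real.rpow_add hT0]; ring_nf
    have h2 : (1/2:ℝ) < (c*β) * T^(β-1) := by
      rw [div_lt_iff₀ (by positivity : (0:ℝ) < c*β)] at hTpow; linarith
    rw [hf]; simp only
    rw [hsplit]
    have hT1α : 0 < T^(1-α) := Real.rpow_pos_of_pos hT0 _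
    nlinarith [hT1α, h2, mul_pos hd hα0]
  -- the two zeros of f
  obtain ⟨t₁, ht₁mem, hft₁⟩ : ∃ t₁ ∈ Ioo ε s, f t₁ = 0 := by
    have := intermediate_value_Ioo (le_of_lt hεmem.2)
      (fun x hx => (hcontf x (hεmem.1.trans_le hx.1)).continuousWithinAt)
      (show (0:ℝ) ∈ Ioo (f ε) (f s) from ⟨hεf, hfs⟩)
    obtain ⟨t₁, ht₁, hft₁⟩ := this
    exact ⟨t₁, ht₁, hft₁⟩
  obtain ⟨t₂, ht₂mem, hft₂⟩ : ∃ t₂ ∈ Ioo s T, f t₂ = 0 := by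
    have := intermediate_value_Ioo' (le_of_lt hsT)
      (fun x hx => (hcontf x (hs0.trans_le hx.1)).continuousWithinAt)
      (show (0:ℝ) ∈ Ioo (f T) (f s) from ⟨hfT, hfs⟩)
    obtain ⟨t₂, ht₂, hft₂⟩ := this
    exact ⟨t₂, ht₂, hft₂⟩
  have ht₁0 : 0 < t₁ := hεmem.1.trans ht₁mem.1
  have ht₁s : t₁ < s := ht₁mem.2
  have hst₂ : s < t₂ := ht₂mem.1
  have ht₁t₂ : t₁ < t₂ := ht₁s.trans hst₂
  -- sign of f
  have fneg1 : ∀ x ∈ Ioo (0:ℝ) t₁, f x < 0 := by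
    intro x hx
    have := fmono ⟨hx.1, (hx.2.trans ht₁s).le⟩ ⟨ht₁0, ht₁s.le⟩ hx.2
    rwa [hft₁] at this
  have fpos : ∀ x ∈ Ioo t₁ t₂, 0 < f x := by
    intro x hx
    rcases le_or_gt x s with hxs | hxs
    · have := fmono ⟨ht₁0, ht₁s.le⟩ ⟨ht₁0.trans hx.1, hxs⟩ hx.1
      rwa [hft₁] at this
    · have := fanti hxs.le (hxs.trans hx.2).le hx.2
      rwa [hft₂] at this
  have fneg2 : ∀ x : ℝ, t₂ < x → f x < 0 := by
    intro x hx
    have := fanti hst₂.le (hst₂.trans hx).le hx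
    rwa [hft₂] at this
  -- monotonicity of h
  have hanti1 : StrictAntiOn h (Ioc 0 t₁) := by
    apply strictAntiOn_of_deriv_neg (convex_Ioc 0 t₁)
      (fun x hx => (hconth x hx.1).continuousWithinAt)
    intro x hx
    rw [interior_Ioc] at hx
    rw [hdh x hx.1]
    exact mul_neg_of_pos_of_neg (Real.rpow_pos_of_pos hx.1 _) (fneg1 x hx)
  have hmono2 : StrictMonoOn h (Icc t₁ t₂) := by
    apply strictMonoOn_of_deriv_pos (convex_Icc t₁ t₂)
      (fun x hx => (hconth x (ht₁0.trans_le hx.1)).continuousWithinAt)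
    intro x hx
    rw [interior_Icc] at hx
    rw [hdh x (ht₁0.trans hx.1)]
    exact mul_pos (Real.rpow_pos_of_pos (ht₁0.trans hx.1) _) (fpos x hx)
  have hanti3 : StrictAntiOn h (Ici t₂) := by
    apply strictAntiOn_of_deriv_neg (convex_Ici t₂)
      (fun x hx => (hconth x ((ht₁0.trans ht₁t₂).trans_le hx)).continuousWithinAt)
    intro x hx
    rw [interior_Ici] at hx
    rw [hdh x ((ht₁0.trans ht₁t₂).trans hx)]
    exact mul_neg_of_pos_of_neg
      (Real.rpow_pos_of_pos ((ht₁0.trans ht₁t₂).trans hx) _) (fneg2 x hx)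
  -- h is negative on (0, t₁]
  have hle : ∀ t ∈ Ioc (0:ℝ) t₁, h t ≤ 0 := by
    intro t ht
    have hev : ∀ᶠ x in nhdsWithin (0:ℝ) (Ioi 0), h t ≤ h x := by
      filter_upwards [Ioo_mem_nhdsGT_of_mem ⟨le_refl 0, ht.1⟩] with x hx
      exact (hanti1 ⟨hx.1, hx.2.le.trans ht.2⟩ ht hx.2).le
    exact ge_of_tendsto (hh0.mono_left nhdsWithin_le_nhds) hev
  have hneg : ∀ t ∈ Ioc (0:ℝ) t₁, h t < 0 := by
    intro t ht
    have h2mem : t/2 ∈ Ioc (0:ℝ) t₁ :=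
      ⟨half_pos ht.1, (half_le_self ht.1.le).trans ht.2⟩
    exact lt_of_lt_of_le (hanti1 h2mem ht (half_lt_self ht.1)) (hle _ h2mem)
  have ht₁neg : h t₁ < 0 := hneg t₁ ⟨ht₁0, le_refl t₁⟩
  -- u lies beyond t₁ and h t₂ > 0
  have ht₁u : t₁ < u := by
    by_contra hcon
    push_neg at hcon
    exact absurd hupos (not_lt.2 (hneg u ⟨hu0, hcon⟩).le)
  have ht₂pos : 0 < h t₂ := by
    rcases lt_trichotomy u t₂ with hlt | heq | hgt
    · exact hupos.trans (hmono2 ⟨ht₁u.le, hlt.le⟩ ⟨ht₁t₂.le, le_refl t₂⟩ hlt)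
    · rwa [heq] at hupos
    · exact hupos.trans (hanti3 self_mem_Ici hgt.le hgt)
  -- first zero R₀
  obtain ⟨R₀, hR₀mem, hR₀⟩ : ∃ R₀ ∈ Ioo t₁ t₂, h R₀ = 0 := by
    have := intermediate_value_Ioo ht₁t₂.le
      (fun x hx => (hconth x (ht₁0.trans_le hx.1)).continuousWithinAt)
      (show (0:ℝ) ∈ Ioo (h t₁) (h t₂) from ⟨ht₁neg, ht₂pos⟩)
    obtain ⟨R₀, hR₀m, hR₀⟩ := this
    exact ⟨R₀, hR₀m, hR₀⟩
  -- a large T₂ with h T₂ < 0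
  obtain ⟨T₂, ht₂T₂, hhT₂⟩ : ∃ T₂ : ℝ, t₂ < T₂ ∧ h T₂ < 0 := by
    set B : ℝ := ((1/2)/c) ^ (1/(β-1)) with hB_def
    have hB0 : 0 < B := Real.rpow_pos_of_pos (by positivity) _
    refine ⟨max (t₂+1) (B+1), lt_of_lt_of_le (by linarith) (le_max_left _ _), ?_⟩
    set T := max (t₂+1) (B+1) with hT_def
    have hT0 : 0 < T :=
      lt_of_lt_of_le (by linarith) (le_max_right _ _)
    have hTB : B < T := lt_of_lt_of_le (by linarith) (le_max_right _ _)
    have hTpow : (1/2)/c < T^(β-1) := by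
      have := hpow_lt hB0.le hTB
      rwa [hroot (by positivity : (0:ℝ) < (1/2)/c)] at this
    have hsplit : T^β = T * T^(β-1) := by
      nth_rewrite 1 [show β = 1 + (β-1) by ring]
      rw [Real.rpow_add hT0, Real.rpow_one]
    have h2 : (1/2:ℝ) < c * T^(β-1) := by
      rw [div_lt_iff₀ hc] at hTpow; linarith
    rw [hh]; simp only
    rw [hsplit]
    have hTα : 0 < T^α := Real.rpow_pos_of_pos hT0 _
    nlinarith [hTα, h2, hT0, hd]
  -- second zero R₁
  obtain ⟨R₁, hR₁mem, hR₁⟩ : ∃ R₁ ∈ Ioo t₂ T₂, h R₁ = 0 := by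
    have := intermediate_value_Ioo' ht₂T₂.le
      (fun x hx => (hconth x ((ht₁0.trans ht₁t₂).trans_le hx.1)).continuousWithinAt)
      (show (0:ℝ) ∈ Ioo (h T₂) (h t₂) from ⟨hhT₂, ht₂pos⟩)
    obtain ⟨R₁, hR₁m, hR₁⟩ := this
    exact ⟨R₁, hR₁m, hR₁⟩
  have hR₀0 : 0 < R₀ := ht₁0.trans hR₀mem.1
  have hR₀t₂ : R₀ < t₂ := hR₀mem.2
  have ht₂R₁ : t₂ < R₁ := hR₁mem.1
  have hR₀R₁ : R₀ < R₁ := hR₀t₂.trans ht₂R₁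
  -- sign characterization
  have hsign : ∀ t > (0:ℝ), (0 < h t ↔ t ∈ Ioo R₀ R₁) := by
    intro t ht
    rcases le_or_gt t t₁ with h1 | h1
    · constructor
      · intro hpos; exact absurd hpos (not_lt.2 (hneg t ⟨ht, h1⟩).le)
      · intro hmem; exact absurd (h1.trans_lt hR₀mem.1) (not_lt.2 hmem.1.le)
    · rcases le_or_gt t t₂ with h2 | h2
      · constructor
        · intro hpos
          refine ⟨?_, lt_of_le_of_lt h2 ht₂R₁⟩
          by_contra hcon
          push_neg at hcon
          rcases eq_or_lt_of_le hcon with heq | hlt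
          · rw [heq, hR₀] at hpos; linarith
          · have := hmono2 ⟨h1.le, h2⟩ ⟨hR₀mem.1.le, hR₀t₂.le⟩ hlt
            rw [hR₀] at this; linarith
        · intro hmem
          have := hmono2 ⟨hR₀mem.1.le, hR₀t₂.le⟩ ⟨h1.le, h2⟩ hmem.1
          rw [hR₀] at this; linarith
      · constructor
        · intro hpos
          refine ⟨hR₀t₂.trans h2, ?_⟩
          by_contra hcon
          push_neg at hcon
          rcases eq_or_lt_of_le hcon with heq | hlt
          · rw [← heq, hR₁] at hpos; linarith
          · have := hanti3 ht₂R₁.le (ht₂R₁.le.trans hlt.le) hlt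
            rw [hR₁] at this; linarith
        · intro hmem
          have := hanti3 h2.le ht₂R₁.le hmem.2
          rw [hR₁] at this; linarith
  -- critical points
  have hcrit : ∀ t > (0:ℝ), (deriv h t = 0 ↔ t = t₁ ∨ t = t₂) := by
    intro t ht
    rw [hdh t ht]
    constructor
    · intro h0
      have hft : f t = 0 := by
        rcases mul_eq_zero.1 h0 with hbad | hgood
        · exact absurd hbad (ne_of_gt (Real.rpow_pos_of_pos ht _))
        · exact hgood
      rcases lt_trichotomy t t₁ with h1 | h1 | h1
      · exact absurd hft (ne_of_lt (fneg1 t ⟨ht, h1⟩))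
      · exact Or.inl h1
      · rcases lt_trichotomy t t₂ with h2 | h2 | h2
        · exact absurd hft (ne_of_gt (fpos t ⟨h1, h2⟩))
        · exact Or.inr h2
        · exact absurd hft (ne_of_lt (fneg2 t h2))
    · intro h0
      rcases h0 with rfl | rfl
      · rw [hft₁]; ring
      · rw [hft₂]; ring
  -- strict minimality on (0, R₀)
  have hmin : ∀ x ∈ Ioo (0:ℝ) R₀, x ≠ t₁ → h t₁ < h x := by
    intro x hx hne
    rcases lt_or_gt_of_ne hne with hlt | hgt
    · exact hanti1 ⟨hx.1, hlt.le⟩ ⟨ht₁0, le_refl t₁⟩ hlt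
    · exact hmono2 ⟨le_refl t₁, ht₁t₂.le⟩ ⟨hgt.le, (hx.2.trans hR₀t₂).le⟩ hgt
  -- strict global maximality
  have hmax : ∀ x > (0:ℝ), x ≠ t₂ → h x < h t₂ := by
    intro x hx hne
    rcases le_or_gt x t₁ with h1 | h1
    · exact (hneg x ⟨hx, h1⟩).trans ht₂pos
    · rcases lt_or_gt_of_ne hne with hlt | hgt
      · exact hmono2 ⟨h1.le, hlt.le⟩ ⟨ht₁t₂.le, le_refl t₂⟩ hlt
      · exact hanti3 self_mem_Ici hgt.le hgt
  exact ⟨R₀, R₁, hR₀0, hR₀R₁, hR₀, hR₁, hsign, t₁, ⟨ht₁0, hR₀mem.1⟩,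
    t₂, ⟨hR₀t₂, ht₂R₁⟩, hcrit, ht₁neg, hmin, ht₂pos, hmax⟩

set_option maxHeartbeats 2000000 in
/-- Geometry of the lower-bound function `h` in the combined-nonlinearity case.
Let `N ≥ 2`, `2 < q < p̄ = 2 + 8/N < p < 2N/(N-4)⁺`, `μ > 0`, `a > 0`, `B_p, B_q > 0`
(the optimal Gagliardo–Nirenberg constants), and set
`h(t) = t/2 - (B_p a^{p - N(p-2)/4}/p) t^{N(p-2)/8} - (μ B_q a^{q - N(q-2)/4}/q) t^{N(q-2)/8}`.
If `μ a^{γ(p,q)} < (p(p̄-q)/(2B_p(p-q)))^{(p̄-q)/(p-p̄)} · (q(p-p̄)/(2B_q(p-q)))` with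
`γ(p,q) = ((p̄-q)/(p-p̄))(p - N(p-2)/4) + (q - N(q-2)/4)`, then there exist
`0 < R₀ < R₁` with `h(R₀) = h(R₁) = 0`, `h > 0` exactly on `(R₀,R₁)`, and `h` has
exactly two critical points on `(0,∞)`: a strict local (indeed strict on `(0,R₀)`)
minimum at negative level in `(0,R₀)` and a strict global maximum at positive level
in `(R₀,R₁)`. -/
theorem lower_bound_function_geometry (N : ℕ) (hN : 2 ≤ N) (p q pb mu a Bp Bq : ℝ)
    (hpb : pb = 2 + 8 / N) (hq : 2 < q) (hqpb : q < pb) (hpbp : pb < p)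
    (hpc : N ≤ 4 ∨ p < 2 * N / (N - 4 : ℝ)) (hmu : 0 < mu) (ha : 0 < a)
    (hBp : 0 < Bp) (hBq : 0 < Bq)
    (hcon : mu * a ^ (((pb - q) / (p - pb)) * (p - N * (p - 2) / 4)
        + (q - N * (q - 2) / 4)) <
      (p * (pb - q) / (2 * Bp * (p - q))) ^ ((pb - q) / (p - pb)) *
        (q * (p - pb) / (2 * Bq * (p - q))))
    (h : ℝ → ℝ)
    (hh : h = fun t => (1 / 2) * t
      - Bp * a ^ (p - N * (p - 2) / 4) / p * t ^ (N * (p - 2) / 8)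
      - mu * Bq * a ^ (q - N * (q - 2) / 4) / q * t ^ (N * (q - 2) / 8)) :
    ∃ R₀ R₁ : ℝ, 0 < R₀ ∧ R₀ < R₁ ∧ h R₀ = 0 ∧ h R₁ = 0 ∧
      (∀ t > (0 : ℝ), (0 < h t ↔ t ∈ Ioo R₀ R₁)) ∧
      ∃ t₁ ∈ Ioo 0 R₀, ∃ t₂ ∈ Ioo R₀ R₁,
        (∀ t > (0 : ℝ), (deriv h t = 0 ↔ t = t₁ ∨ t = t₂)) ∧
        h t₁ < 0 ∧ (∀ s ∈ Ioo (0 : ℝ) R₀, s ≠ t₁ → h t₁ < h s) ∧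
        0 < h t₂ ∧ (∀ s > (0 : ℝ), s ≠ t₂ → h s < h t₂) := by
  have he : (0:ℝ) < (N:ℝ) := by
    have : (2:ℝ) ≤ (N:ℝ) := by exact_mod_cast hN
    linarith
  have hene : (N:ℝ) ≠ 0 := ne_of_gt he
  set e : ℝ := (N:ℝ) with he_def
  set α : ℝ := e * (q - 2) / 8 with hα_def
  set β : ℝ := e * (p - 2) / 8 with hβ_def
  have hpq : q < p := hqpb.trans hpbp
  have hp0 : (0:ℝ) < p := by linarith
  have hq0 : (0:ℝ) < q := by linarith
  have hα0 : 0 < α := by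
    rw [hα_def]; exact div_pos (mul_pos he (by linarith)) (by norm_num)
  have h8e : (0:ℝ) < 8 / e := by positivity
  have h8 : e * (8 / e) = 8 := by field_simp
  have hα1 : α < 1 := by
    have h1 : q - 2 < 8 / e := by rw [hpb] at hqpb; linarith
    have h2 : e * (q - 2) < 8 := by nlinarith [mul_lt_mul_of_pos_left h1 he]
    rw [hα_def]; linarith
  have hβ : 1 < β := by
    have h1 : 8 / e < p - 2 := by rw [hpb] at hpbp; linarith
    have h2 : 8 < e * (p - 2) := by nlinarith [mul_lt_mul_of_pos_left h1 he]
    rw [hβ_def]; linarith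
  have hαβ : α < β := hα1.trans hβ
  have hβα : (0:ℝ) < β - α := by linarith
  have h1α : (0:ℝ) < 1 - α := by linarith
  have hβ1 : (0:ℝ) < β - 1 := by linarith
  set ep : ℝ := p - e * (p - 2) / 4 with hep_def
  set eqq : ℝ := q - e * (q - 2) / 4 with heqq_def
  set c : ℝ := Bp * a ^ ep / p with hc_def
  set d : ℝ := mu * Bq * a ^ eqq / q with hd_def
  have hap : (0:ℝ) < a ^ ep := Real.rpow_pos_of_pos ha _
  have haq : (0:ℝ) < a ^ eqq := Real.rpow_pos_of_pos ha _
  have hc : 0 < c := div_pos (mul_pos hBp hap) hp0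
  have hd : 0 < d := div_pos (mul_pos (mul_pos hmu hBq) haq) hq0
  set θ : ℝ := (1 - α) / (β - 1) with hθ_def
  set G : ℝ := (1 - α) / (2 * c * (β - α)) with hG_def
  set H : ℝ := (β - 1) / (2 * (β - α)) with hH_def
  have hG : 0 < G := div_pos h1α (by positivity)
  have hH : 0 < H := div_pos hβ1 (by positivity)
  have hpbq : pb - q = 8 / e * (1 - α) := by
    rw [hpb, hα_def]; field_simp; ring
  have hppb : p - pb = 8 / e * (β - 1) := by
    rw [hpb, hβ_def]; field_simp; ring
  have hpq2 : p - q = 8 / e * (β - α) := by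
    rw [hα_def, hβ_def]; field_simp; ring
  have hθeq : (pb - q) / (p - pb) = θ := by
    rw [hpbq, hppb, hθ_def, mul_div_mul_left _ _ (ne_of_gt h8e)]
  have hX : p * (pb - q) / (2 * Bp * (p - q)) = a ^ ep * G := by
    rw [hpbq, hpq2, hG_def, hc_def]
    field_simp
  have hY : q * (p - pb) / (2 * Bq * (p - q)) = mu * a ^ eqq * H / d := by
    rw [hppb, hpq2, hH_def, hd_def]
    field_simp
  rw [hθeq, hX, hY] at hcon
  rw [Real.rpow_add ha, mul_comm θ ep, Real.rpow_mul ha.le,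
    Real.mul_rpow hap.le hG.le] at hcon
  -- now: mu * ((a^ep)^θ * a^eqq) < (a^ep)^θ * G^θ * (mu * a^eqq * H / d)
  have hP : (0:ℝ) < (a ^ ep) ^ θ := Real.rpow_pos_of_pos hap _
  have hGθ : (0:ℝ) < G ^ θ := Real.rpow_pos_of_pos hG _
  have hkey : d < G ^ θ * H := by
    have hrw : (a ^ ep) ^ θ * G ^ θ * (mu * a ^ eqq * H / d)
        = (G ^ θ * H) * (mu * ((a ^ ep) ^ θ * a ^ eqq)) / d := by ring
    rw [hrw, lt_div_iff₀ hd] at hcon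
    have hM : 0 < mu * ((a ^ ep) ^ θ * a ^ eqq) := mul_pos hmu (mul_pos hP haq)
    rw [mul_comm (mu * ((a ^ ep) ^ θ * a ^ eqq)) d] at hcon
    exact lt_of_mul_lt_mul_right hcon hM.le
  -- the test point u
  set u : ℝ := G ^ (1 / (β - 1)) with hu_def
  have hu0 : 0 < u := Real.rpow_pos_of_pos hG _
  have hu1 : u ^ (β - 1) = G := by
    rw [hu_def, ← Real.rpow_mul hG.le, one_div_mul_cancel (ne_of_gt hβ1),
      Real.rpow_one]
  have hu1a : u ^ (1 - α) = G ^ θ := by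
    rw [hu_def, ← Real.rpow_mul hG.le, hθ_def]
    congr 1
    ring
  have e2 : u = u ^ α * G ^ θ := by
    rw [← hu1a, ← Real.rpow_add hu0]
    norm_num
  have e1 : u ^ β = u ^ α * G ^ θ * G := by
    rw [show β = α + (1 - α) + (β - 1) by ring, Real.rpow_add hu0,
      Real.rpow_add hu0, hu1a, hu1]
  have hcG : 1 / 2 - c * G = H := by
    rw [hG_def, hH_def]
    field_simp
    ring
  have huα : (0:ℝ) < u ^ α := Real.rpow_pos_of_pos hu0 _
  have hval : h u = u ^ α * (G ^ θ * H - d) := by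
    rw [hh]
    simp only
    linear_combination (1/2 : ℝ) * e2 - c * e1 + (u ^ α * G ^ θ) * hcG
  have hupos : 0 < h u := by
    rw [hval]
    exact mul_pos huα (sub_pos.2 hkey)
  exact geom_main c d α β hc hd hα0 hα1 hβ h hh u hu0 hupos
end

section
/- Let N ≥ 2, 2 < q ≤ p̄ := 2 + 8/N < p < 2N/(N-4)⁺, μ < 0, a > 0, and u ∈ H²(ℝ^N) with ‖u‖_2 = a, u ≠ 0. Define Ψ(τ) := (e^{4τ}/2)‖Δu‖_2² − (e^{N(p-2)τ/2}/p)‖u‖_p^p − (μ e^{N(q-2)τ/2}/q)‖u‖_q^q. Then Ψ has a unique critical point t_u ∈ ℝ, which is a strict global maximum at positive level; Ψ(τ) → 0⁺ as τ → −∞ and Ψ(τ) → −∞ as τ → +∞; and Ψ'(0) < 0 if and only if t_u < 0. -/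
open Filter

set_option maxHeartbeats 2000000 in
/-- Fiber map for `μ < 0`.  Let `N ≥ 2`, `2 < q ≤ p̄ = 2 + 8/N < p < 2N/(N-4)⁺`,
`μ < 0`, `a > 0`, and let `D = ‖Δu‖₂ > 0`, `P = ‖u‖_p > 0`, `Q = ‖u‖_q > 0` come from
`u ∈ H²(ℝ^N)`, `‖u‖₂ = a`, `u ≠ 0`.  The fiber map
`Ψ(τ) = (e^{4τ}/2)D² - (e^{N(p-2)τ/2}/p)P^p - (μ e^{N(q-2)τ/2}/q)Q^q`
has a unique critical point `t_u`, a strict global maximum at positive level;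
`Ψ(τ) → 0⁺` as `τ → -∞`, `Ψ(τ) → -∞` as `τ → +∞`; and `Ψ'(0) < 0 ↔ t_u < 0`. -/
theorem fiber_map_mu_neg (N : ℕ) (hN : 2 ≤ N) (p q mu a : ℝ)
    (hq : 2 < q) (hqpb : q ≤ 2 + 8 / N) (hpbp : 2 + 8 / N < p)
    (hpc : N ≤ 4 ∨ p < 2 * N / (N - 4 : ℝ)) (hmu : mu < 0) (ha : 0 < a)
    (D P Q : ℝ) (hD : 0 < D) (hP : 0 < P) (hQ : 0 < Q)
    (Ψ : ℝ → ℝ)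
    (hΨ : Ψ = fun τ => Real.exp (4 * τ) / 2 * D ^ 2
      - Real.exp (N * (p - 2) * τ / 2) / p * P ^ p
      - mu * Real.exp (N * (q - 2) * τ / 2) / q * Q ^ q) :
    ∃ t : ℝ,
      (∀ τ : ℝ, deriv Ψ τ = 0 ↔ τ = t) ∧
      (∀ τ : ℝ, τ ≠ t → Ψ τ < Ψ t) ∧
      0 < Ψ t ∧
      Tendsto Ψ atBot (nhdsWithin 0 (Set.Ioi 0)) ∧
      Tendsto Ψ atTop atBot ∧
      (deriv Ψ 0 < 0 ↔ t < 0) := by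
  clear hpc ha
  have hNr : (2:ℝ) ≤ (N:ℝ) := by exact_mod_cast hN
  have hN0 : (0:ℝ) < (N:ℝ) := by linarith
  have hp2 : 2 < p := by
    have : (0:ℝ) < 8 / N := by positivity
    linarith
  have hq0 : (0:ℝ) < q := by linarith
  have hp0 : (0:ℝ) < p := by linarith
  set r : ℝ := (N:ℝ) * (p - 2) / 2 with hrdef
  set s : ℝ := (N:ℝ) * (q - 2) / 2 with hsdef
  have hr4 : 4 < r := by
    have h1 : 8 / (N:ℝ) < p - 2 := by linarith
    have h2 : 8 < (p - 2) * N := (div_lt_iff₀ hN0).mp h1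
    rw [hrdef]; nlinarith
  have hs4 : s ≤ 4 := by
    have h1 : q - 2 ≤ 8 / (N:ℝ) := by linarith
    have h2 : (q - 2) * N ≤ 8 := (le_div_iff₀ hN0).mp h1
    rw [hsdef]; nlinarith
  have hs0 : 0 < s := by
    rw [hsdef]
    have h2 : 0 < q - 2 := by linarith
    positivity
  have hmu' : 0 < -mu := neg_pos.mpr hmu
  set K : ℝ := r * P ^ p / p with hKdef
  set C : ℝ := -mu * s * Q ^ q / q with hCdef
  have hK : 0 < K := by rw [hKdef]; positivity
  have hC : 0 < C := by
    rw [hCdef]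
    exact div_pos (mul_pos (mul_pos hmu' hs0) (Real.rpow_pos_of_pos hQ q)) hq0
  set φ : ℝ → ℝ := fun τ => 2 * D ^ 2 + C * Real.exp ((s - 4) * τ)
      - K * Real.exp ((r - 4) * τ) with hφdef
  -- rewrite Ψ
  have hΨ' : Ψ = fun τ => Real.exp (4 * τ) / 2 * D ^ 2
      - Real.exp (r * τ) / p * P ^ p - mu * Real.exp (s * τ) / q * Q ^ q := by
    rw [hΨ]; funext τ
    rw [show (N:ℝ) * (p - 2) * τ / 2 = r * τ by rw [hrdef]; ring,
        show (N:ℝ) * (q - 2) * τ / 2 = s * τ by rw [hsdef]; ring]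
  -- derivative helper
  have hexpder : ∀ (c τ : ℝ), HasDerivAt (fun x => Real.exp (c * x))
      (c * Real.exp (c * τ)) τ := by
    intro c τ
    simpa [mul_comm] using ((hasDerivAt_id τ).const_mul c).exp
  have hΨd : ∀ τ : ℝ, HasDerivAt Ψ (Real.exp (4 * τ) * φ τ) τ := by
    intro τ
    have h1 := ((hexpder 4 τ).div_const 2).mul_const (D ^ 2)
    have h2 := ((hexpder r τ).div_const p).mul_const (P ^ p)
    have h3 := (((hexpder s τ).const_mul mu).div_const q).mul_const (Q ^ q)
    have h := (h1.sub h2).sub h3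
    rw [hΨ']
    refine HasDerivAt.congr_deriv h ?_
    rw [hφdef]
    simp only
    rw [show (s - 4) * τ = s * τ - 4 * τ by ring,
        show (r - 4) * τ = r * τ - 4 * τ by ring,
        Real.exp_sub, Real.exp_sub, hKdef, hCdef]
    have e4 := Real.exp_ne_zero (4 * τ)
    field_simp
    ring
  have hcont : Continuous Ψ := by
    rw [continuous_iff_continuousAt]; exact fun τ => (hΨd τ).continuousAt
  have hφcont : Continuous φ := by rw [hφdef]; fun_prop
  have hφanti : StrictAnti φ := by
    intro x y hxy
    rw [hφdef]
    simp only
    have h1 : C * Real.exp ((s - 4) * y) ≤ C * Real.exp ((s - 4) * x) := by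
      have : (s - 4) * y ≤ (s - 4) * x :=
        mul_le_mul_of_nonpos_left hxy.le (by linarith)
      exact mul_le_mul_of_nonneg_left (Real.exp_le_exp.mpr this) hC.le
    have h2 : K * Real.exp ((r - 4) * x) < K * Real.exp ((r - 4) * y) := by
      have : (r - 4) * x < (r - 4) * y := by nlinarith
      exact mul_lt_mul_of_pos_left (Real.exp_lt_exp.mpr this) hK
    linarith
  -- exp(c τ) → 0 at -∞ for c > 0
  have hexp0 : ∀ c : ℝ, 0 < c →
      Tendsto (fun τ => Real.exp (c * τ)) atBot (nhds 0) := by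
    intro c hc
    exact Real.tendsto_exp_atBot.comp (tendsto_const_mul_atBot_of_pos hc |>.mpr tendsto_id)
  -- existence of a zero of φ
  have hτ1 : ∃ τ₁ : ℝ, 0 < φ τ₁ := by
    have hlim : Tendsto (fun τ => K * Real.exp ((r - 4) * τ)) atBot (nhds (K * 0)) :=
      (hexp0 (r - 4) (by linarith)).const_mul K
    rw [mul_zero] at hlim
    have hev : ∀ᶠ τ in atBot, K * Real.exp ((r - 4) * τ) < 2 * D ^ 2 :=
      hlim.eventually_lt_const (by positivity)
    obtain ⟨τ₁, hτ₁⟩ := hev.exists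
    refine ⟨τ₁, ?_⟩
    rw [hφdef]
    have : 0 < C * Real.exp ((s - 4) * τ₁) := by positivity
    simp only
    linarith
  have hτ2 : ∃ τ₂ : ℝ, φ τ₂ < 0 := by
    have hlin : Tendsto (fun τ : ℝ => (r - 4) * τ) atTop atTop :=
      Tendsto.const_mul_atTop (by linarith) tendsto_id
    have hlim : Tendsto (fun τ => K * Real.exp ((r - 4) * τ)) atTop atTop :=
      Tendsto.const_mul_atTop hK (Real.tendsto_exp_atTop.comp hlin)
    have hev := hlim.eventually_gt_atTop (2 * D ^ 2 + C)
    obtain ⟨τ₂, hτ₂, hτ₂'⟩ := (hev.and (eventually_ge_atTop 0)).exists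
    refine ⟨τ₂, ?_⟩
    rw [hφdef]
    have h1 : C * Real.exp ((s - 4) * τ₂) ≤ C := by
      have : Real.exp ((s - 4) * τ₂) ≤ 1 := by
        rw [Real.exp_le_one_iff]
        exact mul_nonpos_of_nonpos_of_nonneg (by linarith) hτ₂'
      nlinarith
    simp only
    linarith
  obtain ⟨τ₁, hφτ₁⟩ := hτ1
  obtain ⟨τ₂, hφτ₂⟩ := hτ2
  have hτ12 : τ₁ ≤ τ₂ := by
    by_contra h
    push_neg at h
    have := hφanti.antitone h.le
    linarith
  obtain ⟨t, _, htφ⟩ := intermediate_value_Icc' hτ12 hφcont.continuousOn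
    (Set.mem_Icc.mpr ⟨hφτ₂.le, hφτ₁.le⟩)
  -- sign of φ around t
  have hφpos : ∀ x < t, 0 < φ x := fun x hx => htφ ▸ hφanti hx
  have hφneg : ∀ x, t < x → φ x < 0 := fun x hx => htφ ▸ hφanti hx
  -- monotonicity of Ψ
  have hmono : StrictMonoOn Ψ (Set.Iic t) := by
    apply strictMonoOn_of_deriv_pos (convex_Iic t) hcont.continuousOn
    intro x hx
    rw [interior_Iic] at hx
    rw [(hΨd x).deriv]
    exact mul_pos (Real.exp_pos _) (hφpos x hx)
  have hanti : StrictAntiOn Ψ (Set.Ici t) := by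
    apply strictAntiOn_of_deriv_neg (convex_Ici t) hcont.continuousOn
    intro x hx
    rw [interior_Ici] at hx
    rw [(hΨd x).deriv]
    exact mul_neg_of_pos_of_neg (Real.exp_pos _) (hφneg x hx)
  -- Ψ → 0 at -∞
  have hbot0 : Tendsto Ψ atBot (nhds 0) := by
    have h : Tendsto (fun τ => Real.exp (4 * τ) / 2 * D ^ 2
        - Real.exp (r * τ) / p * P ^ p - mu * Real.exp (s * τ) / q * Q ^ q)
        atBot (nhds (0 / 2 * D ^ 2 - 0 / p * P ^ p - mu * 0 / q * Q ^ q)) :=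
      ((((hexp0 4 (by norm_num)).div_const 2).mul_const (D ^ 2)).sub
      (((hexp0 r (by linarith)).div_const p).mul_const (P ^ p))).sub
      ((((hexp0 s hs0).const_mul mu).div_const q).mul_const (Q ^ q))
    rw [hΨ']
    convert h using 2
    norm_num
  -- positivity of Ψ on Iic t
  have hnonneg : ∀ σ, σ ≤ t → 0 ≤ Ψ σ := by
    intro σ hσ
    apply le_of_tendsto hbot0
    filter_upwards [eventually_le_atBot σ] with x hx
    exact hmono.monotoneOn (Set.mem_Iic.mpr (hx.trans hσ)) (Set.mem_Iic.mpr hσ) hx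
  have hpos : ∀ σ, σ ≤ t → 0 < Ψ σ := by
    intro σ hσ
    have h1 : Ψ (σ - 1) < Ψ σ :=
      hmono (Set.mem_Iic.mpr (by linarith)) (Set.mem_Iic.mpr hσ) (by linarith)
    have h2 := hnonneg (σ - 1) (by linarith)
    linarith
  refine ⟨t, ?_, ?_, hpos t le_rfl, ?_, ?_, ?_⟩
  · -- unique critical point
    intro τ
    rw [(hΨd τ).deriv]
    constructor
    · intro h
      rcases mul_eq_zero.mp h with h | h
      · exact absurd h (Real.exp_ne_zero _)
      · exact hφanti.injective (h.trans htφ.symm)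
    · rintro rfl
      rw [htφ, mul_zero]
  · -- strict global maximum
    intro τ hτ
    rcases lt_or_gt_of_ne hτ with h | h
    · exact hmono (Set.mem_Iic.mpr h.le) Set.self_mem_Iic h
    · exact hanti Set.self_mem_Ici (Set.mem_Ici.mpr h.le) h
  · -- Ψ → 0⁺ at -∞
    rw [tendsto_nhdsWithin_iff]
    refine ⟨hbot0, ?_⟩
    filter_upwards [eventually_le_atBot t] with σ hσ
    exact Set.mem_Ioi.mpr (hpos σ hσ)
  · -- Ψ → -∞ at +∞
    have hexp0' : ∀ c : ℝ, c < 0 →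
        Tendsto (fun τ => Real.exp (c * τ)) atTop (nhds 0) := by
      intro c hc
      exact Real.tendsto_exp_atBot.comp (tendsto_const_mul_atBot_of_neg hc |>.mpr tendsto_id)
    have hinner : Tendsto (fun τ => Real.exp ((4 - r) * τ) / 2 * D ^ 2
        - P ^ p / p - mu * Real.exp ((s - r) * τ) / q * Q ^ q) atTop
        (nhds (0 / 2 * D ^ 2 - P ^ p / p - mu * 0 / q * Q ^ q)) := by
      exact ((((hexp0' (4 - r) (by linarith)).div_const 2).mul_const (D ^ 2)).sub
        tendsto_const_nhds).sub
        ((((hexp0' (s - r) (by linarith)).const_mul mu).div_const q).mul_const (Q ^ q))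
    have hval : (0 / 2 * D ^ 2 - P ^ p / p - mu * 0 / q * Q ^ q) < 0 := by
      have : 0 < P ^ p / p := div_pos (Real.rpow_pos_of_pos hP p) hp0
      norm_num
      linarith
    have hexpr : Tendsto (fun τ : ℝ => Real.exp (r * τ)) atTop atTop :=
      Real.tendsto_exp_atTop.comp (Tendsto.const_mul_atTop (by linarith) tendsto_id)
    have hmul := hexpr.atTop_mul_neg hval hinner
    apply hmul.congr
    intro τ
    rw [hΨ']
    simp only
    rw [show (4 - r) * τ = 4 * τ - r * τ by ring,
        show (s - r) * τ = s * τ - r * τ by ring,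
        Real.exp_sub, Real.exp_sub]
    have e := Real.exp_ne_zero (r * τ)
    field_simp
  · -- Ψ'(0) < 0 ↔ t < 0
    rw [(hΨd 0).deriv, show (4:ℝ) * 0 = 0 by ring, Real.exp_zero, one_mul, ← htφ]
    exact hφanti.lt_iff_gt
end

section
/- Let N ≥ 2, 2 + 8/N < p < 2N/(N-4)⁺, a > 0, γ_p = N(p-2)/(4p). If u ∈ H²(ℝ^N) with ‖u‖_2 = a satisfies both ‖Δu‖_2² = γ_p‖u‖_p^p and 2‖Δu‖_2² = pγ_p²‖u‖_p^p, then γ_p(pγ_p − 2)‖u‖_p^p = 0, and since pγ_p > 2 this forces ‖u‖_p = 0 hence ‖Δu‖_2 = 0, contradicting ‖u‖_2 = a > 0 together with the constraint (as u would be a nonzero constant not in L²). Hence the set P⁰_{p,a} is empty. -/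
open MeasureTheory Filter Set

noncomputable section

set_option maxHeartbeats 4000000

section AuxiliaryLemmas
open Metric

local instance euclidPO {N : ℕ} : PartialOrder (EuclideanSpace ℝ (Fin N)) :=
  PartialOrder.lift (WithLp.ofLp) (WithLp.ofLp_injective 2)

lemma abs_coord_le_norm {N : ℕ} (x : EuclideanSpace ℝ (Fin N)) (i : Fin N) : |x i| ≤ ‖x‖ := by
  rw [EuclideanSpace.norm_eq]
  have h1 : |x i| = Real.sqrt (‖x i‖ ^ 2) := by
    rw [Real.sqrt_sq_eq_abs]; simp
  rw [h1]
  apply Real.sqrt_le_sqrt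
  exact Finset.single_le_sum (f := fun j => ‖x j‖ ^ 2) (fun j _ => by positivity) (Finset.mem_univ i)

lemma integral_div_eq_zero {n : ℕ} (F : Fin (n+1) → EuclideanSpace ℝ (Fin (n+1)) → ℝ)
    (F' : Fin (n+1) → EuclideanSpace ℝ (Fin (n+1)) → (EuclideanSpace ℝ (Fin (n+1)) →L[ℝ] ℝ))
    (hFd : ∀ i x, HasFDerivAt (F i) (F' i x) x)
    (ρ : ℝ) (hρ : 0 ≤ ρ)
    (hsupp : ∀ i x, ρ ≤ ‖x‖ → F i x = 0) (hsupp' : ∀ i x, ρ ≤ ‖x‖ → F' i x = 0)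
    (DF : EuclideanSpace ℝ (Fin (n+1)) → ℝ)
    (hDF : ∀ x, DF x = ∑ i, F' i x (EuclideanSpace.single i 1))
    (Hi : Integrable DF) : ∫ x, DF x = 0 := by
  set eL : EuclideanSpace ℝ (Fin (n+1)) ≃L[ℝ] (Fin (n + 1) → ℝ) :=
    PiLp.continuousLinearEquiv 2 ℝ (fun _ : Fin (n+1) => ℝ) with heL
  have he_ord : ∀ x y : EuclideanSpace ℝ (Fin (n+1)), eL x ≤ eL y ↔ x ≤ y := fun x y => Iff.rfl
  have he_vol : MeasurePreserving (⇑eL) volume volume :=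
    EuclideanSpace.volume_preserving_symm_measurableEquiv_toLp (Fin (n + 1))
  set L : ℝ := ρ + 1 with hL
  set a : EuclideanSpace ℝ (Fin (n+1)) := eL.symm (fun _ => -L) with ha
  set b : EuclideanSpace ℝ (Fin (n+1)) := eL.symm (fun _ => L) with hb
  have hcoord : ∀ (z : Fin (n+1) → ℝ) (i : Fin (n+1)), (eL.symm z) i = z i := fun z i => rfl
  have hab : a ≤ b := by
    intro i
    show (-L : ℝ) ≤ L
    linarith
  have hnorm_ge : ∀ x : EuclideanSpace ℝ (Fin (n+1)), (∃ i, L ≤ |x i|) → ρ ≤ ‖x‖ := by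
    rintro x ⟨i, hi⟩
    calc ρ ≤ L := by linarith
    _ ≤ |x i| := hi
    _ ≤ ‖x‖ := abs_coord_le_norm x i
  have key := integral_divergence_of_hasFDerivAt_off_countable_of_equiv eL he_ord he_vol
      F F' ∅ countable_empty a b hab
      (fun i => (continuous_iff_continuousAt.2 fun x => (hFd i x).continuousAt).continuousOn)
      (fun x _ i => hFd i x) DF hDF Hi.integrableOn
  have hfaces : ∀ i : Fin (n+1),
      ((∫ x in Icc (eL a ∘ i.succAbove) (eL b ∘ i.succAbove),
          F i (eL.symm (i.insertNth (eL b i) x))) -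
        ∫ x in Icc (eL a ∘ i.succAbove) (eL b ∘ i.succAbove),
          F i (eL.symm (i.insertNth (eL a i) x))) = 0 := by
    intro i
    have h1 : ∀ x : Fin n → ℝ, F i (eL.symm (i.insertNth (eL b i) x)) = 0 := by
      intro x
      apply hsupp i
      apply hnorm_ge
      refine ⟨i, ?_⟩
      rw [hcoord, Fin.insertNth_apply_same]
      have hbi : eL b i = L := by rw [hb]; simp
      rw [hbi, abs_of_nonneg (by linarith)]
    have h2 : ∀ x : Fin n → ℝ, F i (eL.symm (i.insertNth (eL a i) x)) = 0 := by
      intro x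
      apply hsupp i
      apply hnorm_ge
      refine ⟨i, ?_⟩
      rw [hcoord, Fin.insertNth_apply_same]
      have hai : eL a i = -L := by rw [ha]; simp
      rw [hai, abs_neg, abs_of_nonneg (by linarith)]
    simp [h1, h2]
  have hIcc : ∫ x in Icc a b, DF x = ∫ x, DF x := by
    apply setIntegral_eq_integral_of_forall_compl_eq_zero
    intro x hx
    have hex : ∃ i, L ≤ |x i| := by
      by_contra h
      push_neg at h
      apply hx
      rw [Set.mem_Icc]
      constructor
      · intro i
        have := h i; rw [abs_lt] at this
        show (-L : ℝ) ≤ x i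
        linarith [this.1]
      · intro i
        have := h i; rw [abs_lt] at this
        show x i ≤ (L : ℝ)
        linarith [this.2]
    rw [hDF]
    apply Finset.sum_eq_zero
    intro i _
    rw [hsupp' i x (hnorm_ge x hex)]
    rfl
  rw [← hIcc, key, Finset.sum_eq_zero fun i _ => hfaces i]


lemma quad_aux (m q t : ℝ) (hm : 0 ≤ m) (hq : 0 ≤ q) (ht : t * t ≤ m * q) :
    0 ≤ m + q + 2 * t := by
  nlinarith [sq_nonneg (m - q), sq_nonneg (m + q + 2 * t)]

lemma euclid_vol_univ {n : ℕ} :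
    (volume : Measure (EuclideanSpace ℝ (Fin (n+1)))) univ = ⊤ := by
  have h := EuclideanSpace.volume_preserving_symm_measurableEquiv_toLp (Fin (n+1))
  have h2 : (volume : Measure (EuclideanSpace ℝ (Fin (n+1)))) univ
      = (volume : Measure (Fin (n+1) → ℝ)) univ := by
    have := h.measure_preimage (MeasurableSet.univ.nullMeasurableSet)
    simpa using this
  rw [h2, volume_pi, Measure.pi_univ]
  simp [Real.volume_univ, ENNReal.top_pow]

theorem harmonicFn_zero {n : ℕ} (u : EuclideanSpace ℝ (Fin (n+1)) → ℝ)
    (hu : ContDiff ℝ 2 u)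
    (hlap : ∀ x, ∑ i, fderiv ℝ (fderiv ℝ u) x (EuclideanSpace.single i 1)
      (EuclideanSpace.single i 1) = 0)
    (hu2 : MemLp u 2 volume) : ∀ x, u x = 0 := by
  set D : EuclideanSpace ℝ (Fin (n+1)) → (EuclideanSpace ℝ (Fin (n+1)) →L[ℝ] ℝ) :=
    fderiv ℝ u with hD
  have hu1 : Differentiable ℝ u := hu.differentiable (by norm_num)
  have hD1 : ContDiff ℝ 1 D := hu.fderiv_right (by norm_num)
  have hDdiff : Differentiable ℝ D := hD1.differentiable one_ne_zero
  have hDcont : Continuous D := hD1.continuous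
  set d : Fin (n+1) → EuclideanSpace ℝ (Fin (n+1)) → ℝ :=
    fun i x => D x (EuclideanSpace.single i 1) with hd
  have hdcont : ∀ i, Continuous (d i) := fun i => hDcont.clm_apply continuous_const
  set G : EuclideanSpace ℝ (Fin (n+1)) → ℝ := fun x => ∑ i, d i x * d i x with hG
  have hGc : Continuous G := continuous_finset_sum _ fun i _ => (hdcont i).mul (hdcont i)
  have hGnn : ∀ x, 0 ≤ G x := fun x => Finset.sum_nonneg fun i _ => mul_self_nonneg _
  set Ld : Fin (n+1) → EuclideanSpace ℝ (Fin (n+1)) →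
      (EuclideanSpace ℝ (Fin (n+1)) →L[ℝ] ℝ) :=
    fun i x => (fderiv ℝ D x).flip (EuclideanSpace.single i 1) with hLd
  have hdL : ∀ i x, HasFDerivAt (d i) (Ld i x) x := by
    intro i x
    have h1 : HasFDerivAt D (fderiv ℝ D x) x := (hDdiff x).hasFDerivAt
    have h2 := h1.clm_apply (hasFDerivAt_const (EuclideanSpace.single i 1) x)
    simpa using h2
  have hLdsum : ∀ x, ∑ i, Ld i x (EuclideanSpace.single i 1) = 0 := by
    intro x
    simpa [hLd, ContinuousLinearMap.flip_apply] using hlap x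
  -- fixed bump function
  set c : ContDiffBump (0 : EuclideanSpace ℝ (Fin (n+1))) := ⟨1, 2, one_pos, one_lt_two⟩ with hc
  have hψ₁d : Differentiable ℝ (c : EuclideanSpace ℝ (Fin (n+1)) → ℝ) :=
    (c.contDiff (n := 1)).differentiable one_ne_zero
  set Dψ₁ := fderiv ℝ (c : EuclideanSpace ℝ (Fin (n+1)) → ℝ) with hDψ₁
  have hDψ₁c : Continuous Dψ₁ := (c.contDiff (n := 1)).continuous_fderiv (by norm_num)
  obtain ⟨C₀, hC₀⟩ := (c.hasCompactSupport.fderiv ℝ).exists_bound_of_continuous hDψ₁c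
  set C := max C₀ 0 with hCdef
  have hC : ∀ y, ‖Dψ₁ y‖ ≤ C := fun y => le_trans (hC₀ y) (le_max_left _ _)
  have hCnn : 0 ≤ C := le_max_right _ _
  have hDψ₁0 : ∀ y : EuclideanSpace ℝ (Fin (n+1)), 2 < ‖y‖ → Dψ₁ y = 0 := by
    intro y hy
    by_contra h
    have hmem : y ∈ tsupport (c : EuclideanSpace ℝ (Fin (n+1)) → ℝ) :=
      support_fderiv_subset ℝ (Function.mem_support.2 h)
    rw [c.tsupport_eq] at hmem
    simp only [mem_closedBall, dist_zero_right] at hmem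
    linarith
  have hu2int : Integrable (fun x => u x * u x) := by
    have := hu2.integrable_sq
    simpa [pow_two] using this
  set I₂ := ∫ x, u x * u x with hI₂def
  have hI₂nn : 0 ≤ I₂ := integral_nonneg fun x => mul_self_nonneg _
  set K := 4 * ((n:ℝ)+1) * C^2 * I₂ with hK
  have hKnn : 0 ≤ K := by positivity
  have hrIn : c.rIn = 1 := rfl
  have hrOut : c.rOut = 2 := rfl
  have key : ∀ R : ℝ, 0 < R → ∫ x in ball (0 : EuclideanSpace ℝ (Fin (n+1))) R, G x ≤ K / R^2 := by
    intro R hR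
    set ψ : EuclideanSpace ℝ (Fin (n+1)) → ℝ := fun x => c (R⁻¹ • x) with hψdef
    set Dψ : EuclideanSpace ℝ (Fin (n+1)) → (EuclideanSpace ℝ (Fin (n+1)) →L[ℝ] ℝ) :=
      fun x => (Dψ₁ (R⁻¹ • x)).comp
        (R⁻¹ • ContinuousLinearMap.id ℝ (EuclideanSpace ℝ (Fin (n+1)))) with hDψdef
    have hsm : ∀ x : EuclideanSpace ℝ (Fin (n+1)),
        HasFDerivAt (fun y : EuclideanSpace ℝ (Fin (n+1)) => R⁻¹ • y)
          (R⁻¹ • ContinuousLinearMap.id ℝ (EuclideanSpace ℝ (Fin (n+1)))) x := by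
      intro x
      exact (hasFDerivAt_id x).const_smul R⁻¹
    have hψd : ∀ x, HasFDerivAt ψ (Dψ x) x := fun x =>
      ((hψ₁d _).hasFDerivAt).comp x (hsm x)
    have hψcont : Continuous ψ := c.continuous.comp (continuous_const_smul _)
    have hψnn : ∀ x, 0 ≤ ψ x := fun x => c.nonneg
    have hψle1 : ∀ x, ψ x ≤ 1 := fun x => c.le_one
    have hns : ∀ x : EuclideanSpace ℝ (Fin (n+1)), ‖R⁻¹ • x‖ = R⁻¹ * ‖x‖ := by
      intro x
      rw [norm_smul, Real.norm_eq_abs, abs_inv, abs_of_pos hR]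
    have hψ1 : ∀ x ∈ ball (0 : EuclideanSpace ℝ (Fin (n+1))) R, ψ x = 1 := by
      intro x hx
      apply c.one_of_mem_closedBall
      simp only [mem_ball, dist_zero_right] at hx
      simp only [mem_closedBall, dist_zero_right, hrIn]
      rw [hns]
      calc R⁻¹ * ‖x‖ ≤ R⁻¹ * R := by
            apply mul_le_mul_of_nonneg_left (le_of_lt hx) (by positivity)
      _ = 1 := inv_mul_cancel₀ hR.ne'
    have hψzero : ∀ x : EuclideanSpace ℝ (Fin (n+1)), 2*R+1 ≤ ‖x‖ → ψ x = 0 ∧ Dψ x = 0 := by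
      intro x hx
      have hy : (2:ℝ) < ‖R⁻¹ • x‖ := by
        rw [hns]
        have h2R : 2 * R < ‖x‖ := by linarith
        calc (2:ℝ) = R⁻¹ * (2 * R) := by field_simp
        _ < R⁻¹ * ‖x‖ := by
            apply mul_lt_mul_of_pos_left h2R (by positivity)
      constructor
      · apply c.zero_of_le_dist
        rw [dist_zero_right, hrOut]
        linarith
      · have hz := hDψ₁0 _ hy
        simp [hDψdef, hz]
    have hDψb : ∀ (x : EuclideanSpace ℝ (Fin (n+1))) (i : Fin (n+1)),
        |Dψ x (EuclideanSpace.single i 1)| ≤ C / R := by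
      intro x i
      have h1 : Dψ x (EuclideanSpace.single i 1)
          = Dψ₁ (R⁻¹ • x) (R⁻¹ • (EuclideanSpace.single i 1)) := by
        simp [hDψdef]
      rw [h1]
      have h2 := (Dψ₁ (R⁻¹ • x)).le_opNorm (R⁻¹ • (EuclideanSpace.single i (1:ℝ)))
      rw [hns, EuclideanSpace.norm_single, norm_one, mul_one] at h2
      rw [Real.norm_eq_abs] at h2
      calc |Dψ₁ (R⁻¹ • x) (R⁻¹ • EuclideanSpace.single i 1)| ≤ ‖Dψ₁ (R⁻¹ • x)‖ * R⁻¹ := h2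
      _ ≤ C * R⁻¹ := mul_le_mul_of_nonneg_right (hC _) (by positivity)
      _ = C / R := by rw [div_eq_mul_inv]
    set T : EuclideanSpace ℝ (Fin (n+1)) → ℝ :=
      fun x => ∑ i, d i x * Dψ x (EuclideanSpace.single i 1) with hTdef
    set B : EuclideanSpace ℝ (Fin (n+1)) → ℝ :=
      fun x => ∑ i, Dψ x (EuclideanSpace.single i 1) * Dψ x (EuclideanSpace.single i 1) with hBdef
    have hBnn : ∀ x, 0 ≤ B x := fun x => Finset.sum_nonneg fun i _ => mul_self_nonneg _
    set β : ℝ := ((n:ℝ)+1) * (C/R)^2 with hβdef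
    have hβnn : 0 ≤ β := by positivity
    have hBle : ∀ x, B x ≤ β := by
      intro x
      rw [hBdef, hβdef]
      calc (∑ i, Dψ x (EuclideanSpace.single i 1) * Dψ x (EuclideanSpace.single i 1))
          ≤ ∑ _i : Fin (n+1), (C/R)^2 := by
            apply Finset.sum_le_sum
            intro i _
            have hb := hDψb x i
            have habs := abs_nonneg (Dψ x (EuclideanSpace.single i 1))
            nlinarith [abs_mul_abs_self (Dψ x (EuclideanSpace.single i 1))]
      _ = ((n:ℝ)+1) * (C/R)^2 := by
            rw [Finset.sum_const, Finset.card_univ, Fintype.card_fin, nsmul_eq_mul]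
            push_cast
            try ring
    have hCS : ∀ x, T x * T x ≤ G x * B x := by
      intro x
      have hcs := Finset.sum_mul_sq_le_sq_mul_sq Finset.univ (fun i => d i x)
        (fun i => Dψ x (EuclideanSpace.single i 1))
      simp only [hTdef, hG, hBdef]
      simpa [pow_two] using hcs
    set P : EuclideanSpace ℝ (Fin (n+1)) → ℝ := fun x => u x * (ψ x * ψ x) with hPdef
    set P' : EuclideanSpace ℝ (Fin (n+1)) → (EuclideanSpace ℝ (Fin (n+1)) →L[ℝ] ℝ) :=
      fun x => u x • (ψ x • Dψ x + ψ x • Dψ x) + (ψ x * ψ x) • D x with hP'def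
    have hPd : ∀ x, HasFDerivAt P (P' x) x := fun x =>
      ((hu1 x).hasFDerivAt).mul ((hψd x).mul (hψd x))
    set F : Fin (n+1) → EuclideanSpace ℝ (Fin (n+1)) → ℝ := fun i x => P x * d i x with hFdef
    set F' : Fin (n+1) → EuclideanSpace ℝ (Fin (n+1)) →
        (EuclideanSpace ℝ (Fin (n+1)) →L[ℝ] ℝ) :=
      fun i x => P x • Ld i x + d i x • P' x with hF'def
    have hFd : ∀ i x, HasFDerivAt (F i) (F' i x) x := fun i x => (hPd x).mul (hdL i x)
    set DF : EuclideanSpace ℝ (Fin (n+1)) → ℝ :=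
      fun x => (ψ x * ψ x) * G x + 2 * u x * ψ x * T x with hDFdef
    have hDFsum : ∀ x, DF x = ∑ i, F' i x (EuclideanSpace.single i 1) := by
      intro x
      have h1 : ∀ i : Fin (n+1), F' i x (EuclideanSpace.single i 1)
          = P x * Ld i x (EuclideanSpace.single i 1)
            + ((ψ x * ψ x) * (d i x * d i x)
              + 2 * u x * ψ x * (d i x * Dψ x (EuclideanSpace.single i 1))) := by
        intro i
        simp only [hF'def, ContinuousLinearMap.add_apply, ContinuousLinearMap.smul_apply,
          hP'def, smul_eq_mul, hd]
        ring
      rw [Finset.sum_congr rfl (fun i _ => h1 i), Finset.sum_add_distrib, ← Finset.mul_sum,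
        hLdsum x, mul_zero, zero_add, Finset.sum_add_distrib, ← Finset.mul_sum, ← Finset.mul_sum]
      try (simp only [hDFdef, hG, hTdef]; try ring)
    have hFsupp : ∀ i x, 2*R+1 ≤ ‖x‖ → F i x = 0 := by
      intro i x hx
      simp [hFdef, hPdef, (hψzero x hx).1]
    have hFsupp' : ∀ i x, 2*R+1 ≤ ‖x‖ → F' i x = 0 := by
      intro i x hx
      obtain ⟨h1, h2⟩ := hψzero x hx
      simp [hF'def, hPdef, hP'def, h1, h2]
    have hDψev : ∀ i : Fin (n+1),
        Continuous (fun x => Dψ x (EuclideanSpace.single i 1)) := by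
      intro i
      simp only [hDψdef, ContinuousLinearMap.comp_apply, ContinuousLinearMap.smul_apply,
        ContinuousLinearMap.coe_id', id_eq]
      exact (hDψ₁c.comp (continuous_const_smul _)).clm_apply continuous_const
    have hTcont : Continuous T := by
      rw [hTdef]
      exact continuous_finset_sum _ fun i _ => (hdcont i).mul (hDψev i)
    have hDFcont : Continuous DF := by
      rw [hDFdef]
      exact ((hψcont.mul hψcont).mul hGc).add
        (((continuous_const.mul hu.continuous).mul hψcont).mul hTcont)
    have hDFcpt : HasCompactSupport DF := by
      apply HasCompactSupport.intro
        (isCompact_closedBall (0 : EuclideanSpace ℝ (Fin (n+1))) (2*R+1))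
      intro x hx
      have hxn : 2*R+1 ≤ ‖x‖ := by
        simp only [mem_closedBall, dist_zero_right, not_le] at hx
        linarith
      simp [hDFdef, (hψzero x hxn).1]
    have hDFint : Integrable DF := hDFcont.integrable_of_hasCompactSupport hDFcpt
    have hint0 : ∫ x, DF x = 0 :=
      integral_div_eq_zero F F' hFd (2*R+1) (by linarith) hFsupp hFsupp' DF hDFsum hDFint
    set g₁ : EuclideanSpace ℝ (Fin (n+1)) → ℝ := fun x => (ψ x * ψ x) * G x with hg₁def
    have hg₁cont : Continuous g₁ := (hψcont.mul hψcont).mul hGc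
    have hg₁cpt : HasCompactSupport g₁ := by
      apply HasCompactSupport.intro
        (isCompact_closedBall (0 : EuclideanSpace ℝ (Fin (n+1))) (2*R+1))
      intro x hx
      have hxn : 2*R+1 ≤ ‖x‖ := by
        simp only [mem_closedBall, dist_zero_right, not_le] at hx
        linarith
      simp [hg₁def, (hψzero x hxn).1]
    have hg₁int : Integrable g₁ := hg₁cont.integrable_of_hasCompactSupport hg₁cpt
    have hg₁nn : ∀ x, 0 ≤ g₁ x := fun x => mul_nonneg (mul_self_nonneg _) (hGnn x)
    have hptwise : ∀ x, (1/2) * g₁ x ≤ DF x + 2 * β * (u x * u x) := by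
      intro x
      have hCSx := hCS x
      have hBx := hBle x
      have ht2 : (2 * u x * ψ x * T x) * (2 * u x * ψ x * T x)
          ≤ ((ψ x * ψ x) * G x) * (4 * β * (u x * u x)) := by
        calc (2*u x*ψ x*T x)*(2*u x*ψ x*T x)
            = (4*(u x*u x)*(ψ x*ψ x))*(T x*T x) := by ring
        _ ≤ (4*(u x*u x)*(ψ x*ψ x))*(G x * β) := by
              apply mul_le_mul_of_nonneg_left
                (le_trans hCSx (mul_le_mul_of_nonneg_left hBx (hGnn x)))
              have := mul_self_nonneg (u x)
              have := mul_self_nonneg (ψ x)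
              nlinarith
        _ = ((ψ x*ψ x)*G x) * (4*β*(u x*u x)) := by ring
      have hq := quad_aux ((ψ x * ψ x) * G x) (4 * β * (u x * u x)) (2 * u x * ψ x * T x)
        (mul_nonneg (mul_self_nonneg _) (hGnn x))
        (mul_nonneg (mul_nonneg (by norm_num) hβnn) (mul_self_nonneg _)) ht2
      simp only [hDFdef, hg₁def]
      linarith
    have huu2int : Integrable (fun x => 2 * β * (u x * u x)) := hu2int.const_mul (2*β)
    have hsum_int : Integrable (fun x => DF x + 2 * β * (u x * u x)) := hDFint.add huu2int
    have hmono := integral_mono (hg₁int.const_mul (1/2)) hsum_int hptwise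
    rw [integral_add hDFint huu2int, hint0, zero_add, integral_const_mul,
      integral_const_mul] at hmono
    have hg₁bound : ∫ x, g₁ x ≤ K / R^2 := by
      have hI : (2:ℝ) * β * I₂ = K / R^2 / 2 := by
        rw [hβdef, hK, div_pow]
        field_simp
        ring
      rw [hI] at hmono
      linarith
    have hball : ∫ x in ball (0 : EuclideanSpace ℝ (Fin (n+1))) R, G x
        = ∫ x in ball (0 : EuclideanSpace ℝ (Fin (n+1))) R, g₁ x := by
      apply setIntegral_congr_fun measurableSet_ball
      intro x hx
      simp [hg₁def, hψ1 x hx]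
    rw [hball]
    calc ∫ x in ball (0 : EuclideanSpace ℝ (Fin (n+1))) R, g₁ x
        ≤ ∫ x, g₁ x := setIntegral_le_integral hg₁int (ae_of_all _ hg₁nn)
    _ ≤ K / R^2 := hg₁bound
  -- conclude G ≡ 0
  have hballzero : ∀ r : ℝ, 0 < r → ∫ x in ball (0 : EuclideanSpace ℝ (Fin (n+1))) r, G x = 0 := by
    intro r hr
    have hGint : ∀ R : ℝ, IntegrableOn G (ball (0 : EuclideanSpace ℝ (Fin (n+1))) R) := by
      intro R
      exact (hGc.continuousOn.integrableOn_compact (isCompact_closedBall _ _)).mono_set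
        ball_subset_closedBall
    have hnn : 0 ≤ ∫ x in ball (0 : EuclideanSpace ℝ (Fin (n+1))) r, G x :=
      setIntegral_nonneg measurableSet_ball fun x _ => hGnn x
    have hle : ∀ ε : ℝ, 0 < ε → ∫ x in ball (0 : EuclideanSpace ℝ (Fin (n+1))) r, G x ≤ ε := by
      intro ε hε
      set R := max r (Real.sqrt (K / ε) + 1) with hRdef
      have hR0 : 0 < R := lt_of_lt_of_le hr (le_max_left _ _)
      have h1 : ∫ x in ball (0 : EuclideanSpace ℝ (Fin (n+1))) r, G x
          ≤ ∫ x in ball (0 : EuclideanSpace ℝ (Fin (n+1))) R, G x := by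
        apply setIntegral_mono_set (hGint R) (ae_of_all _ fun x => hGnn x)
        exact HasSubset.Subset.eventuallyLE (ball_subset_ball (le_max_left _ _))
      have h2 : K / R^2 ≤ ε := by
        have hRge : Real.sqrt (K / ε) ≤ R := by
          have h3 := le_max_right r (Real.sqrt (K / ε) + 1)
          linarith
        have hsq : K / ε ≤ R^2 := by
          have h4 : Real.sqrt (K / ε) ^ 2 ≤ R ^ 2 :=
            pow_le_pow_left₀ (Real.sqrt_nonneg _) hRge 2
          rwa [Real.sq_sqrt (by positivity : (0:ℝ) ≤ K / ε)] at h4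
        rw [div_le_iff₀ (by positivity)]
        calc K ≤ R^2 * ε := by
              have := (div_le_iff₀ hε).mp hsq
              linarith
        _ = ε * R^2 := by ring
      linarith [key R hR0, h1]
    have : ∫ x in ball (0 : EuclideanSpace ℝ (Fin (n+1))) r, G x ≤ 0 := by
      by_contra h
      push_neg at h
      linarith [hle _ (half_pos h), half_lt_self h]
    linarith
  have hG0 : ∀ x, G x = 0 := by
    have hae : ∀ᵐ x : EuclideanSpace ℝ (Fin (n+1)), G x = 0 := by
      have hn : ∀ m : ℕ, ∀ᵐ x : EuclideanSpace ℝ (Fin (n+1)),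
          x ∈ ball (0 : EuclideanSpace ℝ (Fin (n+1))) (m+1) → G x = 0 := by
        intro m
        rw [← ae_restrict_iff' measurableSet_ball]
        have hint : IntegrableOn G (ball (0 : EuclideanSpace ℝ (Fin (n+1))) (m+1)) :=
          (hGc.continuousOn.integrableOn_compact (isCompact_closedBall _ _)).mono_set
            ball_subset_closedBall
        have := (integral_eq_zero_iff_of_nonneg hGnn hint).1 (hballzero (m+1) (by positivity))
        exact this
      have hall := (ae_all_iff).2 hn
      filter_upwards [hall] with x hx
      obtain ⟨m, hm⟩ := exists_nat_gt ‖x‖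
      exact hx m (by simp only [mem_ball, dist_zero_right]; push_cast; linarith)
    have h0 : G =ᵐ[volume] (fun _ => (0:ℝ)) := hae
    have hGeq : G = fun _ => (0:ℝ) :=
      (hGc.ae_eq_iff_eq volume (continuous_const (y := (0:ℝ)))).1 h0
    intro x; exact congrFun hGeq x
  have hDzero : ∀ x, fderiv ℝ u x = 0 := by
    intro x
    have hds : ∀ i, d i x = 0 := by
      intro i
      have h := (Finset.sum_eq_zero_iff_of_nonneg
        (fun j _ => mul_self_nonneg (d j x))).1 (hG0 x) i (Finset.mem_univ i)
      exact mul_self_eq_zero.1 h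
    apply ContinuousLinearMap.coe_injective
    apply (EuclideanSpace.basisFun (Fin (n+1)) ℝ).toBasis.ext
    intro i
    simp only [OrthonormalBasis.coe_toBasis, EuclideanSpace.basisFun_apply]
    simpa using hds i
  have hconst : ∀ x y, u x = u y := is_const_of_fderiv_eq_zero hu1 hDzero
  have huconst : u = fun _ => u 0 := funext fun x => hconst x 0
  have : u 0 = 0 := by
    rcases (memLp_const_iff (by norm_num) (by norm_num)).1 (huconst ▸ hu2) with h | h
    · exact h
    · rw [euclid_vol_univ] at h
      exact absurd h (by simp)
  intro x
  rw [hconst x 0, this]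

lemma lap_eq {N : ℕ} (u : EuclideanSpace ℝ (Fin N) → ℝ) (x : EuclideanSpace ℝ (Fin N)) :
    lap u x = ∑ i, fderiv ℝ (fderiv ℝ u) x (EuclideanSpace.single i 1)
      (EuclideanSpace.single i 1) := by
  unfold lap
  apply Finset.sum_congr rfl
  intro i _
  rw [iteratedFDeriv_two_apply]
  simp


end AuxiliaryLemmas

/-- Non-degeneracy of the Pohozaev manifold in the mass-supercritical regime.
Let `N ≥ 2`, `2 + 8/N < p < 2N/(N-4)⁺`, `a > 0`, `γ_p = N(p-2)/(4p)`.  Any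
`u ∈ H²(ℝ^N)` with `‖u‖₂ = a` satisfying both `‖Δu‖₂² = γ_p‖u‖_p^p` and
`2‖Δu‖₂² = pγ_p²‖u‖_p^p` would satisfy `γ_p(pγ_p - 2)‖u‖_p^p = 0`, forcing
`‖u‖_p = 0` and `‖Δu‖₂ = 0`, contradicting `‖u‖₂ = a > 0`; hence the degenerate
Pohozaev set `P⁰_{p,a}` is empty. -/
theorem degenerate_pohozaev_empty (N : ℕ) (hN : 2 ≤ N) (p a γp : ℝ)
    (hpbp : 2 + 8 / N < p) (hpc : N ≤ 4 ∨ p < 2 * N / (N - 4 : ℝ)) (ha : 0 < a)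
    (hγp : γp = N * (p - 2) / (4 * p)) :
    (∀ u : EuclideanSpace ℝ (Fin N) → ℝ, inH2 u → lpnorm 2 u = a →
      lpnorm 2 (lap u) ^ 2 = γp * lpnorm p u ^ p →
      2 * lpnorm 2 (lap u) ^ 2 = p * γp ^ 2 * lpnorm p u ^ p →
      γp * (p * γp - 2) * lpnorm p u ^ p = 0 ∧
      lpnorm p u = 0 ∧ lpnorm 2 (lap u) = 0) ∧
    {u : EuclideanSpace ℝ (Fin N) → ℝ | inH2 u ∧ lpnorm 2 u = a ∧
      lpnorm 2 (lap u) ^ 2 = γp * lpnorm p u ^ p ∧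
      2 * lpnorm 2 (lap u) ^ 2 = p * γp ^ 2 * lpnorm p u ^ p} = ∅ := by
  have hN0 : (0:ℝ) < N := by
    have : 0 < N := by omega
    exact_mod_cast this
  have hp2 : 2 < p := by
    have h8 : (0:ℝ) < 8 / N := by positivity
    linarith
  have hppos : 0 < p := by linarith
  have hγpos : 0 < γp := by
    rw [hγp]
    apply div_pos (mul_pos hN0 (by linarith)) (by linarith)
  have hpγ : 2 < p * γp := by
    have heq : p * γp = N * (p - 2) / 4 := by
      rw [hγp]; field_simp
    rw [heq, lt_div_iff₀ (by norm_num : (0:ℝ) < 4)]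
    have h8 : 8 / (N:ℝ) < p - 2 := by linarith
    have h8' : 8 < (p - 2) * N := (div_lt_iff₀ hN0).mp h8
    nlinarith
  have part1 : ∀ u : EuclideanSpace ℝ (Fin N) → ℝ, inH2 u → lpnorm 2 u = a →
      lpnorm 2 (lap u) ^ 2 = γp * lpnorm p u ^ p →
      2 * lpnorm 2 (lap u) ^ 2 = p * γp ^ 2 * lpnorm p u ^ p →
      γp * (p * γp - 2) * lpnorm p u ^ p = 0 ∧
      lpnorm p u = 0 ∧ lpnorm 2 (lap u) = 0 := by
    intro u _ _ h1' h2'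
    have hX : γp * (p * γp - 2) * lpnorm p u ^ p = 0 := by
      linear_combination 2 * h1' - h2'
    have hcoef : γp * (p * γp - 2) ≠ 0 :=
      ne_of_gt (mul_pos hγpos (by linarith))
    have hX0 : lpnorm p u ^ p = 0 := by
      rcases mul_eq_zero.mp hX with h | h
      · exact absurd h hcoef
      · exact h
    have hup : lpnorm p u = 0 :=
      (Real.rpow_eq_zero ENNReal.toReal_nonneg hppos.ne').mp hX0
    have hlapn : lpnorm 2 (lap u) = 0 := by
      have h3 := h1'
      rw [hX0, mul_zero] at h3
      exact (pow_eq_zero_iff (by norm_num : (2:ℕ) ≠ 0)).mp h3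
    exact ⟨hX, hup, hlapn⟩
  refine ⟨part1, ?_⟩
  rw [Set.eq_empty_iff_forall_notMem]
  rintro u ⟨hH2, h2, h1', h2'⟩
  obtain ⟨hcont, huL2, hlapL2⟩ := hH2
  obtain ⟨hX, hup, hlapn⟩ := part1 u ⟨hcont, huL2, hlapL2⟩ h2 h1' h2'
  have h2e : ENNReal.ofReal (2:ℝ) = (2 : ENNReal) := by norm_num
  have helap : eLpNorm (fun x => lap u x) 2 volume = 0 := by
    have hne := hlapL2.2.ne
    unfold lpnorm at hlapn
    rw [h2e] at hlapn
    rcases (ENNReal.toReal_eq_zero_iff _).mp hlapn with h | h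
    · exact h
    · exact absurd h hne
  have hae0 : (fun x => lap u x) =ᵐ[volume] 0 :=
    (eLpNorm_eq_zero_iff hlapL2.1 (by norm_num)).mp helap
  obtain ⟨n, rfl⟩ : ∃ n, N = n + 1 := ⟨N - 1, by omega⟩
  have hD1 : ContDiff ℝ 1 (fderiv ℝ u) := hcont.fderiv_right (by norm_num)
  have hffc : Continuous (fderiv ℝ (fderiv ℝ u)) := hD1.continuous_fderiv one_ne_zero
  have hlapcont : Continuous (fun x => lap u x) := by
    have : (fun x => lap u x) = fun x => ∑ i, fderiv ℝ (fderiv ℝ u) x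
        (EuclideanSpace.single i 1) (EuclideanSpace.single i 1) :=
      funext fun x => lap_eq u x
    rw [this]
    exact continuous_finset_sum _ fun i _ =>
      (hffc.clm_apply continuous_const).clm_apply continuous_const
  have hlap_all : ∀ x, lap u x = 0 := by
    have hGeq : (fun x => lap u x) = fun _ => (0:ℝ) :=
      (hlapcont.ae_eq_iff_eq volume (continuous_const (y := (0:ℝ)))).mp hae0
    intro x
    exact congrFun hGeq x
  have hlap_f : ∀ x, ∑ i, fderiv ℝ (fderiv ℝ u) x (EuclideanSpace.single i 1)
      (EuclideanSpace.single i 1) = 0 := by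
    intro x
    rw [← lap_eq u x]
    exact hlap_all x
  have hu0 : ∀ x, u x = 0 := harmonicFn_zero u hcont hlap_f huL2
  have hzero : lpnorm 2 u = 0 := by
    have hu0' : u = fun _ => (0:ℝ) := funext hu0
    unfold lpnorm
    rw [hu0']
    simp
  rw [h2] at hzero
  exact absurd hzero ha.ne'
end
end
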